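/- arXiv:1802.01509 — 10 statements merged into one kernel-verified Lean document; each statement's English description precedes it below -/
import Mathlib

section
/- If G is a connected graph with rad(G) ≤ 2, then aw(G,3) ≤ rad(G) + 2. -/
namespace AntiVDW

/-- `v 0, v 1, …, v (k-1)` is a `k`-term arithmetic progression in `G`:
consecutive vertices are at a common finite distance `d`. -/
def IsAPSeq {V : Type*} (G : SimpleGraph V) (k : ℕ) (v : ℕ → V) : Prop :=
  ∃ d : ℕ, ∀ i, i + 1 < k → G.Reachable (v i) (v (i + 1)) ∧ G.dist (v i) (v (i + 1)) = d

/-- `G` contains a `k`-AP that is rainbow under the coloring `c`. -/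
def HasRainbowAP {V α : Type*} (G : SimpleGraph V) (k : ℕ) (c : V → α) : Prop :=
  ∃ v : ℕ → V, IsAPSeq G k v ∧ ∀ i j, i < k → j < k → i ≠ j → c (v i) ≠ c (v j)

/-- The anti-van der Waerden number: the least positive `r` such that every
exact (surjective) `r`-coloring of `G` contains a rainbow `k`-AP. -/
noncomputable def aw {V : Type*} (G : SimpleGraph V) (k : ℕ) : ℕ :=
  sInf {r : ℕ | 0 < r ∧ ∀ c : V → Fin r, Function.Surjective c → HasRainbowAP G k c}

/-- Eccentricity of a vertex. -/
noncomputable def ecc {V : Type*} [Fintype V] (G : SimpleGraph V) (v : V) : ℕ :=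
  Finset.univ.sup fun u => G.dist v u

/-- Radius of a graph. -/
noncomputable def rad {V : Type*} [Fintype V] [Nonempty V] (G : SimpleGraph V) : ℕ :=
  Finset.univ.inf' Finset.univ_nonempty (ecc G)

/-- Diameter of a graph. -/
noncomputable def diam {V : Type*} [Fintype V] (G : SimpleGraph V) : ℕ :=
  Finset.univ.sup (ecc G)

theorem stmt_2 {V : Type*} [Fintype V] [Nonempty V] (G : SimpleGraph V)
    (hG : G.Connected) (hrad : rad G ≤ 2) :
    aw G 3 ≤ rad G + 2 := by
  apply Nat.sInf_le
  refine ⟨by omega, ?_⟩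
  intro c hc
  -- get a center w with ecc G w = rad G
  obtain ⟨w, -, hw⟩ := Finset.exists_mem_eq_inf' (Finset.univ_nonempty (α := V)) (ecc G)
  have hw' : ecc G w = rad G := hw.symm
  have hdist : ∀ u : V, G.dist w u ≤ rad G := fun u =>
    le_trans (Finset.le_sup (Finset.mem_univ u)) (le_of_eq hw')
  have hpos : ∀ u : V, u ≠ w → 1 ≤ G.dist w u := by
    intro u hu
    have := hG.pos_dist_of_ne (u := w) (v := u) (Ne.symm hu)
    omega
  have hrep : ∀ i : {i : Fin (rad G + 2) // i ≠ c w}, ∃ u : V, c u = i.1 :=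
    fun i => hc i.1
  choose A hA using hrep
  have hAne : ∀ i, A i ≠ w := by
    intro i h
    exact i.2 (by rw [← hA i, h])
  have hbd : ∀ i, G.dist w (A i) - 1 < rad G := by
    intro i
    have h1 := hpos (A i) (hAne i)
    have h2 := hdist (A i)
    omega
  have hcard : Fintype.card (Fin (rad G)) <
      Fintype.card {i : Fin (rad G + 2) // i ≠ c w} := by
    have : Fintype.card {i : Fin (rad G + 2) // ¬ i = c w} = rad G + 1 := by
      rw [Fintype.card_subtype_compl, Fintype.card_subtype_eq, Fintype.card_fin]
      omega
    simp [this]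
  obtain ⟨i, j, hij, hfij⟩ := Fintype.exists_ne_map_eq_of_card_lt
    (fun i : {i : Fin (rad G + 2) // i ≠ c w} => (⟨G.dist w (A i) - 1, hbd i⟩ : Fin (rad G)))
    hcard
  have hdeq : G.dist w (A i) = G.dist w (A j) := by
    have h1 := hpos (A i) (hAne i)
    have h2 := hpos (A j) (hAne j)
    have := congrArg Fin.val hfij
    simp only at this
    omega
  have hij' : (i : Fin (rad G + 2)) ≠ (j : Fin (rad G + 2)) :=
    fun h => hij (Subtype.ext h)
  refine ⟨fun n => if n = 0 then A i else if n = 1 then w else A j,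
    ⟨G.dist w (A i), ?_⟩, ?_⟩
  · intro n hn
    have hn' : n < 2 := by omega
    interval_cases n
    · norm_num
      exact ⟨hG.preconnected _ _, by rw [SimpleGraph.dist_comm]⟩
    · norm_num
      exact ⟨hG.preconnected _ _, hdeq.symm⟩
  · intro n m hn hm hnm
    interval_cases n <;> interval_cases m <;> norm_num <;>
      first
      | omega
      | (rw [hA i]; exact i.2)
      | (rw [hA j]; exact j.2)
      | (rw [hA i]; exact fun h => i.2 h.symm)
      | (rw [hA j]; exact fun h => j.2 h.symm)
      | (rw [hA i, hA j]; exact hij')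
      | (rw [hA i, hA j]; exact fun h => hij' h.symm)

end AntiVDW
end

section
/- If G is a connected graph with rad(G) ≥ 3, then aw(G,3) ≤ rad(G) + 1. -/
namespace AntiVDW

private lemma dist_getVert_le' {V : Type*} {G : SimpleGraph V} (hG : G.Connected) :
    ∀ {u v : V} (p : G.Walk u v) (k : ℕ), G.dist u (p.getVert k) ≤ k := by
  intro u v p
  induction p with
  | nil =>
    intro k
    simp [SimpleGraph.Walk.getVert, SimpleGraph.dist_self]
  | @cons a b d h q ih =>
    intro k
    cases k with
    | zero => rw [SimpleGraph.Walk.getVert_zero, SimpleGraph.dist_self]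
    | succ n =>
      rw [SimpleGraph.Walk.getVert_cons_succ]
      have hT : G.dist a (q.getVert n) ≤ G.dist a b + G.dist b (q.getVert n) :=
        hG.dist_triangle
      have h1 : G.dist a b ≤ 1 := by
        simpa using G.dist_le (SimpleGraph.Walk.cons h SimpleGraph.Walk.nil)
      have h2 := ih n
      omega

private lemma dist_exists_between {V : Type*} {G : SimpleGraph V} (hG : G.Connected)
    (u v : V) {k : ℕ} (hk : k ≤ G.dist u v) :
    ∃ x : V, G.dist u x = k ∧ G.dist x v = G.dist u v - k := by
  obtain ⟨p, hp⟩ := hG.exists_walk_length_eq_dist u v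
  have hA : G.dist u (p.getVert k) ≤ k := dist_getVert_le' hG p k
  have hB : G.dist (p.getVert k) v ≤ G.dist u v - k := by
    have h1 : G.dist v (p.reverse.getVert (p.length - k)) ≤ p.length - k :=
      dist_getVert_le' hG p.reverse (p.length - k)
    have h2 : p.reverse.getVert (p.length - k) = p.getVert k := by
      rw [SimpleGraph.Walk.getVert_reverse]
      congr 1
      omega
    rw [h2] at h1
    rw [SimpleGraph.dist_comm]
    omega
  have hT : G.dist u v ≤ G.dist u (p.getVert k) + G.dist (p.getVert k) v := hG.dist_triangle
  exact ⟨p.getVert k, by omega, by omega⟩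


theorem stmt_3 {V : Type*} [Fintype V] [Nonempty V] (G : SimpleGraph V)
    (hG : G.Connected) (hrad : 3 ≤ rad G) :
    aw G 3 ≤ rad G + 1 := by
  classical
  apply Nat.sInf_le
  refine ⟨Nat.succ_pos _, ?_⟩
  intro c hc
  by_contra hno
  -- no-rainbow condition for arbitrary triples
  have NR : ∀ x y z : V, G.dist x y = G.dist y z →
      c x = c y ∨ c y = c z ∨ c x = c z := by
    intro x y z hd
    by_contra hcon
    push_neg at hcon
    obtain ⟨h1, h2, h3⟩ := hcon
    apply hno
    refine ⟨fun n => if n = 0 then x else if n = 1 then y else z, ⟨G.dist x y, ?_⟩, ?_⟩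
    · intro i hi
      have hi2 : i < 2 := by omega
      interval_cases i
      · exact ⟨hG.preconnected x y, rfl⟩
      · exact ⟨hG.preconnected y z, hd.symm⟩
    · intro i j hi hj hij
      interval_cases i <;> interval_cases j <;>
        first
          | exact absurd rfl hij
          | exact h1 | exact h2 | exact h3
          | exact fun e => h1 e.symm | exact fun e => h2 e.symm
          | exact fun e => h3 e.symm
  -- center of the graph
  obtain ⟨w, -, hw⟩ := Finset.exists_mem_eq_inf'
    (Finset.univ_nonempty (α := V)) (ecc G)
  have hw' : rad G = ecc G w := hw
  have hlev : ∀ v : V, G.dist w v ≤ rad G := by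
    intro v
    rw [hw']
    exact Finset.le_sup (Finset.mem_univ v)
  set c0 : Fin (rad G + 1) := c w with hc0
  -- representatives of each color
  obtain ⟨s, hrep⟩ : ∃ s : Fin (rad G + 1) → V, ∀ b, c (s b) = b :=
    ⟨fun b => (hc b).choose, fun b => (hc b).choose_spec⟩
  have hposh : ∀ b : Fin (rad G + 1), b ≠ c0 → 1 ≤ G.dist w (s b) := by
    intro b hb
    rcases Nat.eq_zero_or_pos (G.dist w (s b)) with h0 | h1
    · exact absurd (by rw [← hrep b, ← hG.dist_eq_zero_iff.mp h0]) hb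
    · exact h1
  have hinj : ∀ b b' : Fin (rad G + 1), b ≠ c0 → b' ≠ c0 →
      G.dist w (s b) = G.dist w (s b') → b = b' := by
    intro b b' hb hb' hd
    have hcm : G.dist (s b) w = G.dist w (s b) := SimpleGraph.dist_comm
    rcases NR (s b) w (s b') (by rw [hcm]; exact hd) with h | h | h
    · exact absurd (by rw [← hrep b, h]) hb
    · exact absurd (by rw [← hrep b', ← h]) hb'
    · rw [← hrep b, ← hrep b', h]
  -- counting: every level 1..rad G carries exactly one non-central color
  have hsurj : ∀ j : ℕ, 1 ≤ j → j ≤ rad G →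
      ∃ b : Fin (rad G + 1), b ≠ c0 ∧ G.dist w (s b) = j := by
    have hScard : ((Finset.univ : Finset (Fin (rad G + 1))).erase c0).card = rad G := by
      rw [Finset.card_erase_of_mem (Finset.mem_univ _)]
      simp
    have hsub : ((Finset.univ : Finset (Fin (rad G + 1))).erase c0).image
        (fun b => G.dist w (s b)) ⊆ Finset.Icc 1 (rad G) := by
      intro j hj
      obtain ⟨b, hb, rfl⟩ := Finset.mem_image.mp hj
      have hb' : b ≠ c0 := (Finset.mem_erase.mp hb).1
      exact Finset.mem_Icc.mpr ⟨hposh b hb', hlev _⟩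
    have hicard : (((Finset.univ : Finset (Fin (rad G + 1))).erase c0).image
        (fun b => G.dist w (s b))).card = rad G := by
      rw [Finset.card_image_of_injOn, hScard]
      intro b hb b' hb' hd
      exact hinj b b' (Finset.mem_erase.mp hb).1 (Finset.mem_erase.mp hb').1 hd
    have heq := Finset.eq_of_subset_of_card_le hsub
      (by rw [hicard, Nat.card_Icc]; omega)
    intro j hj1 hj2
    have : j ∈ ((Finset.univ : Finset (Fin (rad G + 1))).erase c0).image
        (fun b => G.dist w (s b)) := by
      rw [heq]; exact Finset.mem_Icc.mpr ⟨hj1, hj2⟩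
    obtain ⟨b, hb, hbj⟩ := Finset.mem_image.mp this
    exact ⟨b, (Finset.mem_erase.mp hb).1, hbj⟩
  -- the sphere lemma at the center
  have P1 : ∀ (x : V) (b : Fin (rad G + 1)), b ≠ c0 →
      G.dist w x = G.dist w (s b) → c x = c0 ∨ c x = b := by
    intro x b hb hd
    have hcm : G.dist x w = G.dist w x := SimpleGraph.dist_comm
    rcases NR x w (s b) (by rw [hcm]; exact hd) with h | h | h
    · exact Or.inl h
    · exact absurd (by rw [← hrep b, ← h]) hb
    · right; rw [h, hrep b]
  -- each color sits only at its own level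
  have P3 : ∀ (x : V) (b : Fin (rad G + 1)), b ≠ c0 → c x = b →
      G.dist w x = G.dist w (s b) := by
    intro x b hb hcx
    have hx0 : G.dist w x ≠ 0 := by
      intro h0
      exact hb (by rw [← hcx, ← hG.dist_eq_zero_iff.mp h0])
    obtain ⟨b', hb', hd'⟩ := hsurj (G.dist w x) (by omega) (hlev x)
    rcases P1 x b' hb' hd'.symm with h | h
    · exact absurd (by rw [← hcx, h]) hb
    · have hbb : b = b' := by rw [← hcx, h]
      rw [hbb, hd']
  -- the three chosen colors/vertices on levels 1, 2, 3
  obtain ⟨b1, hb1, lvl1⟩ := hsurj 1 le_rfl (by omega)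
  obtain ⟨b2, hb2, lvl2⟩ := hsurj 2 (by omega) (by omega)
  obtain ⟨b3, hb3, lvl3⟩ := hsurj 3 (by omega) hrad
  have hb12 : b1 ≠ b2 := fun e => by rw [e, lvl2] at lvl1; omega
  have hb13 : b1 ≠ b3 := fun e => by rw [e, lvl3] at lvl1; omega
  have hb23 : b2 ≠ b3 := fun e => by rw [e, lvl3] at lvl2; omega
  -- the ball of radius 2 around any b2-colored vertex only sees colors c0, b2
  have ball2 : ∀ v : V, c v = b2 → ∀ x : V,
      (G.dist v x = 1 ∨ G.dist v x = 2) → c x = c0 ∨ c x = b2 := by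
    intro v hv
    have hdv : G.dist w v = 2 := by rw [P3 v b2 hb2 hv, lvl2]
    obtain ⟨y, hy1, hy2⟩ := dist_exists_between hG w v (k := 1) (by omega)
    rw [hdv] at hy2
    have hcy : c y = c0 := by
      rcases P1 y b1 hb1 (by rw [hy1, lvl1]) with h | h
      · exact h
      · exfalso
        rcases NR w y v (by rw [hy1]; omega) with e | e | e
        · exact hb1 (by rw [← h, ← e, hc0])
        · exact hb12 (by rw [← h, ← hv, e])
        · exact hb2 (by rw [← hv, ← e, hc0])
    intro x hx
    have cm1 : G.dist x v = G.dist v x := SimpleGraph.dist_comm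
    rcases hx with hx | hx
    · have cm2 : G.dist v y = G.dist y v := SimpleGraph.dist_comm
      rcases NR x v y (by omega) with e | e | e
      · right; rw [e, hv]
      · exact absurd (by rw [← hv, e, hcy]) hb2
      · left; rw [e, hcy]
    · have cm2 : G.dist v w = G.dist w v := SimpleGraph.dist_comm
      rcases NR x v w (by omega) with e | e | e
      · right; rw [e, hv]
      · exact absurd (by rw [← hv, e, hc0]) hb2
      · left; rw [e, hc0]
  -- the ball of radius 2 around any b3-colored vertex only sees colors c0, b3
  have ball3 : ∀ v : V, c v = b3 → ∀ x : V,
      (G.dist v x = 1 ∨ G.dist v x = 2) → c x = c0 ∨ c x = b3 := by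
    intro v hv
    have hdv : G.dist w v = 3 := by rw [P3 v b3 hb3 hv, lvl3]
    obtain ⟨y, hy1, hy2⟩ := dist_exists_between hG w v (k := 2) (by omega)
    rw [hdv] at hy2
    obtain ⟨z, hz1, hz2⟩ := dist_exists_between hG w y (k := 1) (by omega)
    rw [hy1] at hz2
    have hzv : G.dist z v = 2 := by
      have t1 : G.dist z v ≤ G.dist z y + G.dist y v := hG.dist_triangle
      have t2 : G.dist w v ≤ G.dist w z + G.dist z v := hG.dist_triangle
      omega
    have hcz' : c z = c0 ∨ c z = b1 := P1 z b1 hb1 (by rw [hz1, lvl1])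
    have hcy : c y = c0 := by
      rcases P1 y b2 hb2 (by rw [hy1, lvl2]) with h | h
      · exact h
      · exfalso
        rcases NR z y v (by omega) with e | e | e
        · rcases hcz' with h' | h'
          · exact hb2 (by rw [← h, ← e, h'])
          · exact hb12 (by rw [← h', e, h])
        · exact hb23 (by rw [← h, ← hv, e])
        · rcases hcz' with h' | h'
          · exact hb3 (by rw [← hv, ← e, h'])
          · exact hb13 (by rw [← h', e, hv])
    have hcz : c z = c0 := by
      rcases hcz' with h' | h'
      · exact h'
      · exfalso
        rcases NR z y v (by omega) with e | e | e
        · exact hb1 (by rw [← h', e, hcy])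
        · exact hb3 (by rw [← hv, ← e, hcy])
        · exact hb13 (by rw [← h', e, hv])
    intro x hx
    have cm1 : G.dist x v = G.dist v x := SimpleGraph.dist_comm
    rcases hx with hx | hx
    · have cm2 : G.dist v y = G.dist y v := SimpleGraph.dist_comm
      rcases NR x v y (by omega) with e | e | e
      · right; rw [e, hv]
      · exact absurd (by rw [← hv, e, hcy]) hb3
      · left; rw [e, hcy]
    · have cm2 : G.dist v z = G.dist z v := SimpleGraph.dist_comm
      rcases NR x v z (by omega) with e | e | e
      · right; rw [e, hv]
      · exact absurd (by rw [← hv, e, hcz]) hb3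
      · left; rw [e, hcz]
  -- endgame
  have cu1 : c (s b1) = b1 := hrep b1
  have cu2 : c (s b2) = b2 := hrep b2
  have cu3 : c (s b3) = b3 := hrep b3
  have cmw1 : G.dist (s b1) w = G.dist w (s b1) := SimpleGraph.dist_comm
  have d12 : G.dist (s b1) (s b2) = 3 := by
    have hle : G.dist (s b1) (s b2) ≤ G.dist (s b1) w + G.dist w (s b2) := hG.dist_triangle
    have h0 : G.dist (s b1) (s b2) ≠ 0 := by
      intro e
      exact hb12 (by rw [← cu1, hG.dist_eq_zero_iff.mp e, cu2])
    have hne1 : G.dist (s b2) (s b1) ≠ 1 := by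
      intro e
      rcases ball2 (s b2) cu2 (s b1) (Or.inl e) with h | h
      · exact hb1 (by rw [← cu1, h])
      · exact hb12 (by rw [← cu1, h])
    have hne2 : G.dist (s b2) (s b1) ≠ 2 := by
      intro e
      rcases ball2 (s b2) cu2 (s b1) (Or.inr e) with h | h
      · exact hb1 (by rw [← cu1, h])
      · exact hb12 (by rw [← cu1, h])
    have cm : G.dist (s b2) (s b1) = G.dist (s b1) (s b2) := SimpleGraph.dist_comm
    omega
  have d13 : G.dist (s b1) (s b3) = 3 ∨ G.dist (s b1) (s b3) = 4 := by
    have hle : G.dist (s b1) (s b3) ≤ G.dist (s b1) w + G.dist w (s b3) := hG.dist_triangle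
    have h0 : G.dist (s b1) (s b3) ≠ 0 := by
      intro e
      exact hb13 (by rw [← cu1, hG.dist_eq_zero_iff.mp e, cu3])
    have hne1 : G.dist (s b3) (s b1) ≠ 1 := by
      intro e
      rcases ball3 (s b3) cu3 (s b1) (Or.inl e) with h | h
      · exact hb1 (by rw [← cu1, h])
      · exact hb13 (by rw [← cu1, h])
    have hne2 : G.dist (s b3) (s b1) ≠ 2 := by
      intro e
      rcases ball3 (s b3) cu3 (s b1) (Or.inr e) with h | h
      · exact hb1 (by rw [← cu1, h])
      · exact hb13 (by rw [← cu1, h])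
    have cm : G.dist (s b3) (s b1) = G.dist (s b1) (s b3) := SimpleGraph.dist_comm
    omega
  rcases d13 with d13 | d13
  · have cm : G.dist (s b2) (s b1) = G.dist (s b1) (s b2) := SimpleGraph.dist_comm
    rcases NR (s b2) (s b1) (s b3) (by omega) with e | e | e
    · exact hb12 (by rw [← cu1, ← cu2, e])
    · exact hb13 (by rw [← cu1, ← cu3, e])
    · exact hb23 (by rw [← cu2, ← cu3, e])
  · obtain ⟨q, hq1, hq3⟩ := dist_exists_between hG (s b1) (s b3) (k := 2) (by omega)
    rw [d13] at hq3
    have cmq : G.dist (s b3) q = G.dist q (s b3) := SimpleGraph.dist_comm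
    have hcq : c q = c0 ∨ c q = b3 :=
      ball3 (s b3) cu3 q (Or.inr (by omega))
    rcases hcq with hcq | hcq
    · rcases NR (s b1) q (s b3) (by omega) with e | e | e
      · exact hb1 (by rw [← cu1, e, hcq, hc0])
      · exact hb3 (by rw [← cu3, ← e, hcq, hc0])
      · exact hb13 (by rw [← cu1, ← cu3, e])
    · have cmq1 : G.dist q (s b1) = G.dist (s b1) q := SimpleGraph.dist_comm
      rcases ball3 q hcq (s b1) (Or.inr (by omega)) with e | e
      · exact hb1 (by rw [← cu1, e])
      · exact hb13 (by rw [← cu1, e])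

end AntiVDW
end

section
/- If G is a connected graph with diam(G) = 2, then aw(G,3) = 3. -/
namespace AntiVDW

lemma buildAP {V : Type*} (G : SimpleGraph V) (hG : G.Connected)
    (c : V → Fin 3) (a m b : V)
    (hd : G.dist a m = G.dist m b)
    (hab : c a ≠ c b) (ham : c a ≠ c m) (hmb : c m ≠ c b) :
    HasRainbowAP G 3 c := by
  refine ⟨fun i => if i = 0 then a else if i = 1 then m else b, ⟨G.dist a m, ?_⟩, ?_⟩
  · intro i hi
    have h2 : i = 0 ∨ i = 1 := by omega
    rcases h2 with rfl | rfl
    · exact ⟨hG.preconnected a m, rfl⟩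
    · exact ⟨hG.preconnected m b, hd.symm⟩
  · intro i j hi hj hij
    interval_cases i <;> interval_cases j <;> simp_all <;> first
      | exact ham | exact hab | exact hmb
      | exact fun h => ham h.symm | exact fun h => hab h.symm
      | exact fun h => hmb h.symm

theorem stmt_4 {V : Type*} [Fintype V] (G : SimpleGraph V)
    (hG : G.Connected) (hdiam : diam G = 2) :
    aw G 3 = 3 := by
  classical
  have hne : Nonempty V := by
    by_contra h
    rw [not_nonempty_iff] at h
    simp [diam, Finset.univ_eq_empty] at hdiam
  -- extract a pair at distance 2
  obtain ⟨u, -, hu⟩ := Finset.exists_mem_eq_sup (Finset.univ (α := V))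
    Finset.univ_nonempty (ecc G)
  have hu2 : ecc G u = 2 := by rw [← hu]; exact hdiam
  obtain ⟨w, -, hw⟩ := Finset.exists_mem_eq_sup (Finset.univ (α := V))
    Finset.univ_nonempty (fun x => G.dist u x)
  have hw2 : G.dist u w = 2 := by
    rw [← hw]; exact hu2
  clear hw
  have huw : u ≠ w := by
    intro h; rw [h, SimpleGraph.dist_self] at hw2; omega
  have hle2 : ∀ x y : V, G.dist x y ≤ 2 := by
    intro x y
    calc G.dist x y ≤ ecc G x := Finset.le_sup (Finset.mem_univ y)
    _ ≤ diam G := Finset.le_sup (Finset.mem_univ x)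
    _ = 2 := hdiam
  have hpos : ∀ x y : V, x ≠ y → 1 ≤ G.dist x y := fun x y h => hG.pos_dist_of_ne h
  have h3 : (3 : ℕ) ∈ {r : ℕ | 0 < r ∧
      ∀ c : V → Fin r, Function.Surjective c → HasRainbowAP G 3 c} := by
    refine ⟨by norm_num, fun c hc => ?_⟩
    obtain ⟨x, hx⟩ := hc 0
    obtain ⟨y, hy⟩ := hc 1
    obtain ⟨z, hz⟩ := hc 2
    have hxy : c x ≠ c y := by rw [hx, hy]; decide
    have hyz : c y ≠ c z := by rw [hy, hz]; decide
    have hxz : c x ≠ c z := by rw [hx, hz]; decide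
    have dxy := hle2 x y; have dyz := hle2 y z; have dxz := hle2 x z
    have pxy := hpos x y (fun h => hxy (by rw [h]))
    have pyz := hpos y z (fun h => hyz (by rw [h]))
    have pxz := hpos x z (fun h => hxz (by rw [h]))
    have cyx : G.dist y x = G.dist x y := SimpleGraph.dist_comm
    have czy : G.dist z y = G.dist y z := SimpleGraph.dist_comm
    have czx : G.dist z x = G.dist x z := SimpleGraph.dist_comm
    rcases eq_or_ne (G.dist x y) (G.dist y z) with h | h1
    · exact buildAP G hG c x y z (by omega) hxz hxy hyz
    rcases eq_or_ne (G.dist x y) (G.dist x z) with h | h2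
    · exact buildAP G hG c y x z (by omega) hyz (fun hh => hxy hh.symm) hxz
    · exact buildAP G hG c x z y (by omega) hxy hxz (fun hh => hyz hh.symm)
  unfold aw
  refine le_antisymm (Nat.sInf_le h3) (le_csInf ⟨3, h3⟩ ?_)
  rintro r ⟨hr, hall⟩
  by_contra hlt
  push_neg at hlt
  -- r ≤ 2, build a surjective coloring with no rainbow AP
  have : ∃ c : V → Fin r, Function.Surjective c := by
    interval_cases r
    · exact ⟨fun _ => 0, fun i => ⟨Classical.arbitrary V, Subsingleton.elim _ _⟩⟩
    · refine ⟨fun x => if x = u then 0 else 1, fun i => ?_⟩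
      fin_cases i
      · exact ⟨u, by simp⟩
      · exact ⟨w, by simp [Ne.symm huw]⟩
  obtain ⟨c, hc⟩ := this
  obtain ⟨v, -, hrb⟩ := hall c hc
  have h01 := hrb 0 1 (by omega) (by omega) (by omega)
  have h02 := hrb 0 2 (by omega) (by omega) (by omega)
  have h12 := hrb 1 2 (by omega) (by omega) (by omega)
  have b0 := (c (v 0)).isLt
  have b1 := (c (v 1)).isLt
  have b2 := (c (v 2)).isLt
  have n01 : (c (v 0)).val ≠ (c (v 1)).val := fun h => h01 (Fin.ext h)
  have n02 : (c (v 0)).val ≠ (c (v 2)).val := fun h => h02 (Fin.ext h)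
  have n12 : (c (v 1)).val ≠ (c (v 2)).val := fun h => h12 (Fin.ext h)
  omega


end AntiVDW
end

section
/- If T is a tree whose diameter d is odd and satisfies d ≥ 3, then aw(T,3) ≥ 4; that is, there exists a surjective 3-coloring of V(T) with no rainbow 3-AP. -/
namespace AntiVDW

open SimpleGraph Walk Function

section TreeLemmas

variable {V : Type*} {T : SimpleGraph V}

private lemma path_length_eq (hT : T.IsTree) {u v : V} (p : T.Walk u v) (hp : p.IsPath) :
    p.length = T.dist u v := by
  classical
  obtain ⟨q, hq⟩ := (hT.isConnected u v).exists_walk_length_eq_dist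
  have h1 : q.bypass.IsPath := q.bypass_isPath
  have h2 : q.bypass.length = T.dist u v :=
    le_antisymm (hq ▸ q.length_bypass_le) (SimpleGraph.dist_le _)
  have h3 := (hT.existsUnique_path u v).unique hp h1
  rw [h3, h2]

private lemma dist_add_of_mem_support (hT : T.IsTree) {u v : V} (p : T.Walk u v)
    (hp : p.IsPath) {m : V} (hm : m ∈ p.support) :
    T.dist u m + T.dist m v = T.dist u v := by
  classical
  rw [← path_length_eq hT _ (hp.takeUntil hm), ← path_length_eq hT _ (hp.dropUntil hm),
    ← length_append, take_spec]
  exact path_length_eq hT p hp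

private lemma isPath_append' {a m b : V} {p : T.Walk a m} {q : T.Walk m b}
    (hp : p.IsPath) (hq : q.IsPath) (h : ∀ x ∈ p.support, x ∈ q.support → x = m) :
    (p.append q).IsPath := by
  rw [isPath_def, support_append]
  refine List.Nodup.append hp.support_nodup (hq.support_nodup.sublist (List.tail_sublist _)) ?_
  intro x hxp hxq
  have hx := h x hxp (List.mem_of_mem_tail hxq)
  subst hx
  have hnd := hq.support_nodup
  rw [q.support_eq_cons] at hnd
  exact (List.nodup_cons.mp hnd).1 hxq

private lemma median_on (hT : T.IsTree) (c a b : V) (P : T.Walk a b) (hP : P.IsPath)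
    {m : V} (hm : m ∈ P.support)
    (hmin : ∀ x ∈ P.support, T.dist c m ≤ T.dist c x) :
    T.dist c m + T.dist m a = T.dist c a ∧ T.dist c m + T.dist m b = T.dist c b ∧
      T.dist a m + T.dist m b = T.dist a b := by
  classical
  obtain ⟨R, hR, -⟩ := hT.existsUnique_path c m
  have key : ∀ (w : V) (seg : T.Walk m w), seg.IsPath → (∀ x ∈ seg.support, x ∈ P.support) →
      T.dist c m + T.dist m w = T.dist c w := by
    intro w seg hseg hsub
    have hdisj : ∀ x ∈ R.support, x ∈ seg.support → x = m := by
      intro x hxR hxseg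
      have h1 : T.dist c x + T.dist x m = T.dist c m := dist_add_of_mem_support hT R hR hxR
      have h2 : T.dist c m ≤ T.dist c x := hmin x (hsub x hxseg)
      have h3 : T.dist x m = 0 := by omega
      exact ((hT.isConnected x m).dist_eq_zero_iff).mp h3
    have hPath : (R.append seg).IsPath := isPath_append' hR hseg hdisj
    have h4 := path_length_eq hT _ hPath
    rw [length_append, path_length_eq hT R hR, path_length_eq hT seg hseg] at h4
    exact h4
  refine ⟨?_, ?_, dist_add_of_mem_support hT P hP hm⟩
  · exact key a ((P.takeUntil m hm).reverse) ((hP.takeUntil hm).reverse) (fun x hx => by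
      rw [support_reverse, List.mem_reverse] at hx
      exact support_takeUntil_subset _ _ hx)
  · exact key b (P.dropUntil m hm) (hP.dropUntil hm) (fun x hx =>
      support_dropUntil_subset _ _ hx)

private lemma median (hT : T.IsTree) (c a b : V) :
    ∃ m : V, T.dist c m + T.dist m a = T.dist c a ∧ T.dist c m + T.dist m b = T.dist c b ∧
      T.dist a m + T.dist m b = T.dist a b := by
  classical
  obtain ⟨P, hP, -⟩ := hT.existsUnique_path a b
  obtain ⟨m, hmP, hmin⟩ := (P.support.toFinset).exists_min_image (fun x => T.dist c x)
    ⟨a, List.mem_toFinset.mpr P.start_mem_support⟩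
  rw [List.mem_toFinset] at hmP
  exact ⟨m, median_on hT c a b P hP hmP (fun x hx => hmin x (List.mem_toFinset.mpr hx))⟩

private lemma parity (hT : T.IsTree) (u v w : V) :
    ∃ k, T.dist u v + T.dist v w = T.dist u w + 2 * k := by
  obtain ⟨m, h1, h2, h3⟩ := median hT v u w
  have c1 : T.dist u v = T.dist v u := T.dist_comm
  have c2 : T.dist m u = T.dist u m := T.dist_comm
  exact ⟨T.dist v m, by omega⟩

private lemma fourpt (hT : T.IsTree) (a b c e : V) :
    T.dist a b + T.dist c e ≤ max (T.dist a e + T.dist b c) (T.dist a c + T.dist b e) := by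
  classical
  obtain ⟨P, hP, -⟩ := hT.existsUnique_path a b
  obtain ⟨m1, hm1P, hmin1⟩ := (P.support.toFinset).exists_min_image (fun x => T.dist c x)
    ⟨a, List.mem_toFinset.mpr P.start_mem_support⟩
  obtain ⟨m2, hm2P, hmin2⟩ := (P.support.toFinset).exists_min_image (fun x => T.dist e x)
    ⟨a, List.mem_toFinset.mpr P.start_mem_support⟩
  rw [List.mem_toFinset] at hm1P hm2P
  obtain ⟨hc_a, hc_b, hab1⟩ := median_on hT c a b P hP hm1P
    (fun x hx => hmin1 x (List.mem_toFinset.mpr hx))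
  obtain ⟨he_a, he_b, hab2⟩ := median_on hT e a b P hP hm2P
    (fun x hx => hmin2 x (List.mem_toFinset.mpr hx))
  have tri1 : T.dist c e ≤ T.dist c m1 + T.dist m1 e :=
    hT.isConnected.dist_triangle
  have tri2 : T.dist m1 e ≤ T.dist m1 m2 + T.dist m2 e :=
    hT.isConnected.dist_triangle
  have cm1a : T.dist m1 a = T.dist a m1 := T.dist_comm
  have cm2a : T.dist m2 a = T.dist a m2 := T.dist_comm
  have ccm1 : T.dist c m1 = T.dist m1 c := T.dist_comm
  have cem2 : T.dist e m2 = T.dist m2 e := T.dist_comm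
  have cae : T.dist a e = T.dist e a := T.dist_comm
  have cbc : T.dist b c = T.dist c b := T.dist_comm
  have cac : T.dist a c = T.dist c a := T.dist_comm
  have cbe : T.dist b e = T.dist e b := T.dist_comm
  have hm1P' := hm1P
  rw [← take_spec P hm2P, mem_support_append_iff] at hm1P'
  rcases hm1P' with hcase | hcase
  · have e1 : T.dist a m1 + T.dist m1 m2 = T.dist a m2 :=
      dist_add_of_mem_support hT _ (hP.takeUntil hm2P) hcase
    refine le_trans ?_ (le_max_left _ _)
    omega
  · have e1 : T.dist m2 m1 + T.dist m1 b = T.dist m2 b :=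
      dist_add_of_mem_support hT _ (hP.dropUntil hm2P) hcase
    have cm12 : T.dist m1 m2 = T.dist m2 m1 := T.dist_comm
    refine le_trans ?_ (le_max_right _ _)
    omega


private lemma core (hT : T.IsTree) {p q A B C : V} {d : ℕ} (hodd : Odd d)
    (hpq : T.dist p q = d) (hbound : ∀ u v, T.dist u v ≤ d)
    (hA : T.dist A q = d) (hB : T.dist B p = d) (hBq : T.dist B q ≠ d)
    (hCp : T.dist C p ≠ d) (hCq : T.dist C q ≠ d)
    (hmid : T.dist A B = T.dist A C ∨ T.dist B A = T.dist B C ∨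
      T.dist C A = T.dist C B) : False := by
  obtain ⟨s, hs⟩ := hodd
  have cqp : T.dist q p = T.dist p q := T.dist_comm
  have cqB : T.dist q B = T.dist B q := T.dist_comm
  obtain ⟨k1, hk1⟩ := parity hT A q p
  obtain ⟨k2, hk2⟩ := parity hT B p q
  -- d A p is even, hence ≠ d and ≤ d - 1 ; d B q is even
  have hbAp := hbound A p
  have hbBq := hbound B q
  have hbAB := hbound A B
  -- L1 : dist A B = d
  have h4 := fourpt hT A q B p
  rw [le_max_iff] at h4
  have hAB : T.dist A B = d := by
    rcases h4 with h | h <;> omega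
  rcases hmid with hm | hm | hm
  · -- middle A : dist A C = d
    have h5 := fourpt hT A C p q
    rw [le_max_iff] at h5
    have hbCp := hbound C p
    have hbCq := hbound C q
    rcases h5 with h | h <;> omega
  · -- middle B : dist B C = d
    have cBA : T.dist B A = T.dist A B := T.dist_comm
    have h5 := fourpt hT B C p q
    rw [le_max_iff] at h5
    have hbCp := hbound C p
    have hbCq := hbound C q
    rcases h5 with h | h <;> omega
  · -- middle C : parity contradiction
    obtain ⟨k3, hk3⟩ := parity hT A C B
    have cAC : T.dist A C = T.dist C A := T.dist_comm
    have cCB : T.dist C B = T.dist C B := rfl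
    omega


end TreeLemmas

private lemma fin3_cases (x : Fin 3) : x = 0 ∨ x = 1 ∨ x = 2 := by omega

theorem stmt_9 {V : Type*} [Fintype V] (T : SimpleGraph V) (hT : T.IsTree)
    (hodd : Odd (diam T)) (h3 : 3 ≤ diam T) :
    4 ≤ aw T 3 ∧ ∃ c : V → Fin 3, Function.Surjective c ∧ ¬ HasRainbowAP T 3 c := by
  classical
  set d := diam T with hd
  haveI : Nonempty V := by
    by_contra h
    rw [not_nonempty_iff] at h
    have : diam T = 0 := by simp [diam, Finset.univ_eq_empty]
    omega
  obtain ⟨p, -, hp⟩ := Finset.exists_mem_eq_sup (Finset.univ : Finset V)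
    Finset.univ_nonempty (ecc T)
  obtain ⟨q, -, hq⟩ := Finset.exists_mem_eq_sup (Finset.univ : Finset V)
    Finset.univ_nonempty (fun u => T.dist p u)
  have hpq : T.dist p q = d := (hp.trans hq).symm
  have hbound : ∀ u v, T.dist u v ≤ d := by
    intro u v
    calc T.dist u v ≤ ecc T u := Finset.le_sup (Finset.mem_univ v)
    _ ≤ d := Finset.le_sup (Finset.mem_univ u)
  -- a neighbor of p
  have hne : p ≠ q := by
    intro h; rw [h, SimpleGraph.dist_self] at hpq; omega
  obtain ⟨W, -⟩ := hT.existsUnique_path p q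
  have hy : ∃ y, T.Adj p y := by
    cases W with
    | nil => exact absurd rfl hne
    | cons h w => exact ⟨_, h⟩
  obtain ⟨y, hyadj⟩ := hy
  have hyp : T.dist p y = 1 := by
    have h1 : T.dist p y ≤ 1 := by
      have := SimpleGraph.dist_le (Walk.cons hyadj Walk.nil)
      simpa using this
    have h2 : T.dist p y ≠ 0 := fun h0 =>
      hyadj.ne ((hT.isConnected p y).dist_eq_zero_iff.mp h0)
    omega
  -- the coloring
  have hmain : ∃ c : V → Fin 3, Function.Surjective c ∧ ¬ HasRainbowAP T 3 c := by
    refine ⟨fun v => if T.dist v q = d then 0 else if T.dist v p = d then 1 else 2, ?_, ?_⟩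
    · intro i
      rcases fin3_cases i with h | h | h
      · exact ⟨p, by simp [hpq, h]⟩
      · refine ⟨q, ?_⟩
        have h1 : T.dist q q = 0 := SimpleGraph.dist_self
        have h2 : T.dist q p = d := by rw [T.dist_comm]; exact hpq
        simp [h1, h2, h]
        omega
      · refine ⟨y, ?_⟩
        have h1 : T.dist y p = 1 := by rw [T.dist_comm]; exact hyp
        have h2 : T.dist y q ≠ d := by
          obtain ⟨k, hk⟩ := parity hT p y q
          obtain ⟨s, hs⟩ := hodd
          have := hbound y q
          omega
        simp [h1, h2, h]
        omega
    · rintro ⟨v, ⟨t, hAP⟩, hrb⟩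
      have h01 := (hAP 0 (by norm_num)).2
      have h12 := (hAP 1 (by norm_num)).2
      have h10 : T.dist (v 1) (v 0) = t := by rw [T.dist_comm]; exact h01
      have hmideq : T.dist (v 1) (v 0) = T.dist (v 1) (v 2) := by rw [h10, h12]
      have hc01 := hrb 0 1 (by norm_num) (by norm_num) (by norm_num)
      have hc02 := hrb 0 2 (by norm_num) (by norm_num) (by norm_num)
      have hc12 := hrb 1 2 (by norm_num) (by norm_num) (by norm_num)
      set c : V → Fin 3 := fun v => if T.dist v q = d then 0 else if T.dist v p = d then 1 else 2
        with hcdef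
      have hc0 : ∀ x, c x = 0 → T.dist x q = d := by
        intro x hx
        by_contra h
        by_cases h' : T.dist x p = d <;> simp [hcdef, h, h'] at hx
      have hc1 : ∀ x, c x = 1 → T.dist x p = d ∧ T.dist x q ≠ d := by
        intro x hx
        by_cases h : T.dist x q = d
        · simp [hcdef, h] at hx
        · by_cases h' : T.dist x p = d
          · exact ⟨h', h⟩
          · simp [hcdef, h, h'] at hx
      have hc2 : ∀ x, c x = 2 → T.dist x p ≠ d ∧ T.dist x q ≠ d := by
        intro x hx
        by_cases h : T.dist x q = d
        · simp [hcdef, h] at hx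
        · by_cases h' : T.dist x p = d
          · simp [hcdef, h, h'] at hx
          · exact ⟨h', h⟩
      rcases fin3_cases (c (v 0)) with h0 | h0 | h0 <;>
        rcases fin3_cases (c (v 1)) with h1 | h1 | h1 <;>
          rcases fin3_cases (c (v 2)) with h2 | h2 | h2
      all_goals first
        | exact hc01 (h0.trans h1.symm)
        | exact hc02 (h0.trans h2.symm)
        | exact hc12 (h1.trans h2.symm)
        | exact core hT hodd hpq hbound (hc0 _ h0) (hc1 _ h1).1 (hc1 _ h1).2
            (hc2 _ h2).1 (hc2 _ h2).2 (Or.inr (Or.inl hmideq))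
        | exact core hT hodd hpq hbound (hc0 _ h0) (hc1 _ h2).1 (hc1 _ h2).2
            (hc2 _ h1).1 (hc2 _ h1).2 (Or.inr (Or.inr hmideq))
        | exact core hT hodd hpq hbound (hc0 _ h1) (hc1 _ h0).1 (hc1 _ h0).2
            (hc2 _ h2).1 (hc2 _ h2).2 (Or.inl hmideq)
        | exact core hT hodd hpq hbound (hc0 _ h2) (hc1 _ h0).1 (hc1 _ h0).2
            (hc2 _ h1).1 (hc2 _ h1).2 (Or.inr (Or.inr hmideq))
        | exact core hT hodd hpq hbound (hc0 _ h1) (hc1 _ h2).1 (hc1 _ h2).2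
            (hc2 _ h0).1 (hc2 _ h0).2 (Or.inl hmideq)
        | exact core hT hodd hpq hbound (hc0 _ h2) (hc1 _ h1).1 (hc1 _ h1).2
            (hc2 _ h0).1 (hc2 _ h0).2 (Or.inr (Or.inl hmideq))
        | exact hc01 (h0.trans h1.symm)
        | exact hc02 (h0.trans h2.symm)
        | exact hc12 (h1.trans h2.symm)
        | exact core hT hodd hpq hbound (hc0 _ h0) (hc1 _ h1).1 (hc1 _ h1).2
            (hc2 _ h2).1 (hc2 _ h2).2 (Or.inr (Or.inl hmideq.symm))
        | exact core hT hodd hpq hbound (hc0 _ h0) (hc1 _ h2).1 (hc1 _ h2).2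
            (hc2 _ h1).1 (hc2 _ h1).2 (Or.inr (Or.inr hmideq.symm))
        | exact core hT hodd hpq hbound (hc0 _ h1) (hc1 _ h0).1 (hc1 _ h0).2
            (hc2 _ h2).1 (hc2 _ h2).2 (Or.inl hmideq.symm)
        | exact core hT hodd hpq hbound (hc0 _ h2) (hc1 _ h0).1 (hc1 _ h0).2
            (hc2 _ h1).1 (hc2 _ h1).2 (Or.inr (Or.inr hmideq.symm))
        | exact core hT hodd hpq hbound (hc0 _ h1) (hc1 _ h2).1 (hc1 _ h2).2
            (hc2 _ h0).1 (hc2 _ h0).2 (Or.inl hmideq.symm)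
        | exact core hT hodd hpq hbound (hc0 _ h2) (hc1 _ h1).1 (hc1 _ h1).2
            (hc2 _ h0).1 (hc2 _ h0).2 (Or.inr (Or.inl hmideq.symm))
  obtain ⟨c, hcsurj, hcnorb⟩ := hmain
  refine ⟨?_, c, hcsurj, hcnorb⟩
  -- aw ≥ 4
  have hSne : Set.Nonempty {r : ℕ | 0 < r ∧ ∀ c : V → Fin r, Function.Surjective c →
      HasRainbowAP T 3 c} := by
    refine ⟨Fintype.card V + 1, Nat.succ_pos _, fun c' hc' => ?_⟩
    have := Fintype.card_le_of_surjective c' hc'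
    simp at this
  rw [aw]
  have hmem := Nat.sInf_mem hSne
  set r := sInf {r : ℕ | 0 < r ∧ ∀ c : V → Fin r, Function.Surjective c →
      HasRainbowAP T 3 c} with hr
  by_contra hlt
  push_neg at hlt
  obtain ⟨hrpos, hrall⟩ := hmem
  have : r = 1 ∨ r = 2 ∨ r = 3 := by omega
  rcases this with h | h | h
  · rw [h] at hrall
    obtain ⟨w, -, hrb⟩ := hrall (fun _ => 0) (fun i => ⟨p, Subsingleton.elim _ _⟩)
    exact hrb 0 1 (by norm_num) (by norm_num) (by norm_num) (Subsingleton.elim _ _)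
  · rw [h] at hrall
    have hqp : q ≠ p := fun h => hne h.symm
    obtain ⟨w, -, hrb⟩ := hrall (fun v => if v = p then 0 else 1) (by
      intro i
      rcases Fin.exists_fin_two.mp ⟨i, rfl⟩ with h | h <;> subst h
      · exact ⟨p, by simp⟩
      · exact ⟨q, by simp [hqp]⟩)
    have key : ∀ x y z : Fin 2, x ≠ y → x ≠ z → y ≠ z → False := by decide
    exact key _ _ _ (hrb 0 1 (by norm_num) (by norm_num) (by norm_num))
      (hrb 0 2 (by norm_num) (by norm_num) (by norm_num))
      (hrb 1 2 (by norm_num) (by norm_num) (by norm_num))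
  · rw [h] at hrall
    exact hcnorb (hrall c hcsurj)


end AntiVDW
end

section
/- Let G and H be connected graphs, and let G_1,...,G_m be the copies of G in the Cartesian product G □ H indexed by the vertices of H. If c is a coloring of G □ H with no rainbow 3-AP, then for all i, j the set of colors appearing on G_j contains at most one color not appearing on G_i, i.e., |c(G_j) \ c(G_i)| ≤ 1. -/
/-!
Suppose two distinct colors `a`, `b` occur on `G_j` at `(u, j)` and `(v, j)` but not on `G_i`,
and let `ℓ = d_G(u, v) > 0`, `h = d_H(j, i)`. If `h ≤ ℓ`, a vertex `y` on a `u`–`v` geodesic with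
`d_G(v, y) = ℓ - h` gives the 3-AP `(u, j), (v, j), (y, i)` with common distance `ℓ`, which is
rainbow. If `h > ℓ`, let `t` be the vertex at distance `ℓ` from `j` on a `j`–`i` geodesic: the
absence of rainbow 3-APs forces `c(u, t) = b` and `c(v, t) = a`, so `G_t`, which is closer to
`G_i`, has the same configuration with `a` and `b` swapped, and we conclude by induction on `h`.
-/

namespace AntiVDW

section

open SimpleGraph

variable {V W α : Type*}

lemma hasRainbowAP_three_of_dist_eq {Γ : SimpleGraph V} {c : V → α} {x y z : V}
    (hxy : Γ.Reachable x y) (hyz : Γ.Reachable y z) (hd : Γ.dist x y = Γ.dist y z)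
    (h₁ : c x ≠ c y) (h₂ : c y ≠ c z) (h₃ : c x ≠ c z) : HasRainbowAP Γ 3 c := by
  refine ⟨fun n => [x, y, z].getD n z, ⟨Γ.dist x y, fun n hn => ?_⟩, fun m n hm hn hmn => ?_⟩
  · match n, hn with
    | 0, _ => exact ⟨hxy, rfl⟩
    | 1, _ => exact ⟨hyz, hd.symm⟩
  · interval_cases m <;> interval_cases n <;> simp_all [Ne.symm]

lemma dist_boxProd_of_reachable {G : SimpleGraph V} {H : SimpleGraph W} {x y : V × W}
    (hG : G.Reachable x.1 y.1) (hH : H.Reachable x.2 y.2) :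
    (G □ H).dist x y = G.dist x.1 y.1 + H.dist x.2 y.2 := by
  have h := edist_boxProd (G := G) (H := H) x y
  rw [← hG.coe_dist_eq_edist, ← hH.coe_dist_eq_edist,
    ← (reachable_boxProd.2 ⟨hG, hH⟩).coe_dist_eq_edist] at h
  exact_mod_cast h

lemma Reachable.exists_dist_eq_dist_eq {G : SimpleGraph V} {u v : V} (hr : G.Reachable u v)
    {k m : ℕ} (hkm : k + m = G.dist u v) : ∃ y, G.dist u y = k ∧ G.dist y v = m := by
  obtain ⟨p, hp⟩ := hr.exists_walk_length_eq_dist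
  refine ⟨p.getVert k, ?_, ?_⟩
  · rw [← length_eq_dist_of_subwalk hp (p.isSubwalk_take k), Walk.take_length]
    omega
  · rw [← length_eq_dist_of_subwalk hp (p.isSubwalk_drop k), Walk.drop_length]
    omega

section NoRainbow

variable {G : SimpleGraph V} {H : SimpleGraph W} {c : V × W → α}
  (hG : G.Connected) (hH : H.Connected) (hc : ¬ HasRainbowAP (G □ H) 3 c)
include hG hH hc

lemma color_eq_or_eq_or_eq_of_dist_eq {x y z : V × W}
    (hd : G.dist x.1 y.1 + H.dist x.2 y.2 = G.dist y.1 z.1 + H.dist y.2 z.2) :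
    c x = c y ∨ c y = c z ∨ c x = c z := by
  have hr : (G □ H).Connected := hG.boxProd hH
  by_contra! hne
  refine hc (hasRainbowAP_three_of_dist_eq (hr.preconnected x y) (hr.preconnected y z) ?_
    hne.1 hne.2.1 hne.2.2)
  rwa [dist_boxProd_of_reachable (hG.preconnected _ _) (hH.preconnected _ _),
    dist_boxProd_of_reachable (hG.preconnected _ _) (hH.preconnected _ _)]

lemma color_eq_of_dist_eq_of_absent {a b : α} {i j t : W} {u v : V} (hab : a ≠ b)
    (ha : ∀ x, c (x, i) ≠ a) (hb : ∀ x, c (x, i) ≠ b) (hu : c (u, j) = a) (hv : c (v, j) = b)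
    (hjt : H.dist j t = G.dist u v) (hti : G.dist u v + H.dist t i = H.dist j i) :
    c (u, t) = b := by
  -- `(u, t), (u, j), (v, j)` is a 3-AP of step `d_G(u, v)`, and `(u, t), (v, i), (v, j)` one of
  -- step `d_H(j, i)`.
  have hsame := color_eq_or_eq_or_eq_of_dist_eq hG hH hc (x := (u, t)) (y := (u, j)) (z := (v, j))
    (by simp [hjt, H.dist_comm (u := t)])
  have hfar := color_eq_or_eq_or_eq_of_dist_eq hG hH hc (x := (u, t)) (y := (v, i)) (z := (v, j))
    (by simp [hti, H.dist_comm (u := i)])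
  rw [hu, hv] at hsame
  rw [hv] at hfar
  rcases hsame with hA | hab' | hB
  · rw [hA] at hfar
    rcases hfar with h | h | h
    · exact absurd h.symm (ha v)
    · exact absurd h (hb v)
    · exact absurd h hab
  · exact absurd hab' hab
  · exact hB

lemma eq_of_absent_from_layer {a b : α} {i j : W} {u v : V}
    (ha : ∀ x, c (x, i) ≠ a) (hb : ∀ x, c (x, i) ≠ b) (hu : c (u, j) = a) (hv : c (v, j) = b) :
    a = b := by
  obtain ⟨n, hn⟩ : ∃ n, H.dist j i = n := ⟨_, rfl⟩
  induction n using Nat.strong_induction_on generalizing j u v a b with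
  | _ n ih =>
  by_contra hab
  have hℓ : 0 < G.dist u v := hG.pos_dist_of_ne fun huv => hab (by rw [← hu, ← hv, huv])
  by_cases hnℓ : n ≤ G.dist u v
  · obtain ⟨y, hvy, -⟩ := Reachable.exists_dist_eq_dist_eq (hG.preconnected v u)
      (k := G.dist u v - n) (m := n) (by rw [G.dist_comm (u := v)]; omega)
    have := color_eq_or_eq_or_eq_of_dist_eq hG hH hc (x := (u, j)) (y := (v, j)) (z := (y, i))
      (by simp [hvy, hn]; omega)
    rw [hu, hv] at this
    rcases this with h | h | h
    · exact hab h
    · exact hb y h.symm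
    · exact ha y h.symm
  · obtain ⟨t, hjt, hti⟩ := Reachable.exists_dist_eq_dist_eq (hH.preconnected j i)
      (k := G.dist u v) (m := n - G.dist u v) (by omega)
    have hut := color_eq_of_dist_eq_of_absent hG hH hc hab ha hb hu hv hjt (by omega)
    have hvt := color_eq_of_dist_eq_of_absent hG hH hc (Ne.symm hab) hb ha hv hu
      (by rw [hjt, G.dist_comm]) (by rw [G.dist_comm (u := v)]; omega)
    exact hab (ih (n - G.dist u v) (by omega) hb ha hut hvt hti).symm

end NoRainbow

end

theorem stmt_11_general {V W α : Type*}
    (G : SimpleGraph V) (H : SimpleGraph W) (hG : G.Connected) (hH : H.Connected)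
    (c : V × W → α) (h : ¬ HasRainbowAP (G.boxProd H) 3 c) (i j : W) :
    ((c '' {p : V × W | p.2 = j}) \ (c '' {p : V × W | p.2 = i})).Subsingleton := by
  rintro _ ⟨⟨⟨u, _⟩, rfl, rfl⟩, ha⟩ _ ⟨⟨⟨v, _⟩, rfl, rfl⟩, hb⟩
  exact eq_of_absent_from_layer hG hH h (fun x hx => ha ⟨(x, i), rfl, hx⟩)
    (fun x hx => hb ⟨(x, i), rfl, hx⟩) rfl rfl

/-- In a rainbow-3-AP-free coloring of `G □ H`, the copy of `G` indexed by `j`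
uses at most one color that does not appear on the copy indexed by `i`. -/
theorem stmt_11 {V W α : Type*} [Fintype V] [Fintype W]
    (G : SimpleGraph V) (H : SimpleGraph W) (hG : G.Connected) (hH : H.Connected)
    (c : V × W → α) (h : ¬ HasRainbowAP (G.boxProd H) 3 c) (i j : W) :
    ((c '' {p : V × W | p.2 = j}) \ (c '' {p : V × W | p.2 = i})).Subsingleton :=
  stmt_11_general G H hG hH c h i j

end AntiVDW
end

section
/- For the hypercube Q_n with n ≥ 2 even, aw(Q_n,3) = 3: every surjective 3-coloring of the vertices of Q_n contains a rainbow 3-AP. -/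
namespace AntiVDW

/-- The `n`-dimensional hypercube. -/
def hypercube (n : ℕ) : SimpleGraph (Fin n → Bool) where
  Adj x y := hammingDist x y = 1
  symm := ⟨fun x y h => by simpa [hammingDist_comm] using h⟩
  loopless := ⟨fun x h => by simp [hammingDist_self] at h⟩

/-!
The hypercube distance is the Hamming distance, and we induct on the dimension `n` (over any
finite coordinate type `ι`); for `n = 2` two of the three distances in a rainbow triple coincide.
Write `v̄ = toggle univ v` for the antipode of `v`. For `n ≥ 4`, take a surjective 3-colouring
`c` without rainbow AP. By induction no rainbow triple lies in a face of codimension two (a copy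
of `Q_{n-2}`), i.e. agrees on two coordinates.

If every antipodal pair `v, v̄` is monochromatic, let `x y` be a bichromatic edge and `z` a
vertex of the third colour: each of the `n - 1 ≥ 3` coordinates where `x` and `y` agree is shared
by `z` or by `z̄`, so one of the rainbow triples `x y z`, `x y z̄` agrees on two coordinates.

Otherwise `c p = A ≠ B = c p̄`; call the third colour `T`. A sphere around `p` that meets `T` is
entirely `T`, as any other colour on it gives a rainbow AP through `p` or `p̄`. A vertex at
distance `n / 2` from `p` (here `n` is even) is the midpoint of `p` and `p̄`, so it is not `T`;
by symmetry it is `A`. Then every `T`-vertex is a neighbour of `p` (a `T`-vertex on a larger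
sphere agrees with that `A`-vertex and `p̄` on two coordinates), and a vertex at distance
`n - 2` from `p` can have no colour at all.
-/

open Finset Function
open scoped symmDiff

section Cube
variable {ι : Type*} [DecidableEq ι]

def toggle (s : Finset ι) (v : ι → Bool) : ι → Bool := fun i => v i ^^ decide (i ∈ s)

@[simp] lemma toggle_apply (s : Finset ι) (v : ι → Bool) (i : ι) :
    toggle s v i = (v i ^^ decide (i ∈ s)) := rfl

variable [Fintype ι]

lemma hammingDist_toggle_toggle (s t : Finset ι) (v : ι → Bool) :
    hammingDist (toggle s v) (toggle t v) = #(s ∆ t) := by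
  unfold hammingDist
  congr 1
  ext i
  by_cases hs : i ∈ s <;> by_cases ht : i ∈ t <;> simp [hs, ht, mem_symmDiff]

lemma hammingDist_toggle (s : Finset ι) (v : ι → Bool) : hammingDist v (toggle s v) = #s := by
  unfold hammingDist
  congr 1
  ext i
  simp only [mem_filter, mem_univ, true_and]
  by_cases hs : i ∈ s <;> simp [hs]

lemma hammingDist_toggle_univ_left (v w : ι → Bool) :
    hammingDist (toggle univ v) w = Fintype.card ι - hammingDist v w := by
  unfold hammingDist
  rw [← card_compl]
  congr 1
  ext i
  cases v i <;> cases w i <;> simp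

@[simp] lemma toggle_univ_toggle_univ (v : ι → Bool) : toggle univ (toggle univ v) = v := by
  ext; simp

lemma hammingDist_toggle_univ_right (v w : ι → Bool) :
    hammingDist v (toggle univ w) = Fintype.card ι - hammingDist v w := by
  rw [hammingDist_comm, hammingDist_toggle_univ_left, hammingDist_comm]

lemma hammingDist_toggle_singleton_add_one {v w : ι → Bool} {a : ι} (h : v a ≠ w a) :
    hammingDist (toggle {a} v) w + 1 = hammingDist v w := by
  unfold hammingDist
  have : ({i | toggle {a} v i ≠ w i} : Finset ι) = ({i | v i ≠ w i} : Finset ι).erase a := by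
    ext i
    by_cases hi : i = a
    · subst hi; cases hv : v i <;> cases hw : w i <;> simp_all
    · simp [hi]
  rw [this, card_erase_add_one (by simpa using h)]

lemma exists_step_toward {v w : ι → Bool} (h : v ≠ w) :
    ∃ u, hammingDist v u = 1 ∧ hammingDist u w + 1 = hammingDist v w := by
  obtain ⟨a, ha⟩ := Function.ne_iff.mp h
  exact ⟨toggle {a} v, by simp [hammingDist_toggle], hammingDist_toggle_singleton_add_one ha⟩

lemma exists_hammingDist_eq_one_ne {α : Type*} (c : (ι → Bool) → α) {v w : ι → Bool}
    (h : c v ≠ c w) : ∃ x y, hammingDist x y = 1 ∧ c x ≠ c y := by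
  induction hd : hammingDist v w generalizing v with
  | zero => exact absurd (congrArg c (hammingDist_eq_zero.mp hd)) h
  | succ d ih =>
    obtain ⟨u, hvu, huw⟩ := exists_step_toward (ne_of_apply_ne c h)
    by_cases hcu : c v = c u
    · exact ih (hcu ▸ h) (by omega)
    · exact ⟨v, u, hvu, hcu⟩

end Cube

section Coloring

variable {V α : Type*}

def Rainbow (c : V → α) (x y z : V) : Prop := c x ≠ c y ∧ c x ≠ c z ∧ c y ≠ c z

lemma Rainbow.eq_or_eq_or_eq {c : V → Fin 3} {x y z : V} (h : Rainbow c x y z) (t : Fin 3) :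
    t = c x ∨ t = c y ∨ t = c z := by
  obtain ⟨hxy, hxz, hyz⟩ := h
  revert hxy hxz hyz
  generalize c x = a, c y = b, c z = d
  revert a b d t
  decide

lemma exists_rainbow_of_ne {c : V → Fin 3} (hc : Surjective c) {x y : V} (h : c x ≠ c y) :
    ∃ z, Rainbow c x y z := by
  obtain ⟨t, hx, hy⟩ : ∃ t : Fin 3, c x ≠ t ∧ c y ≠ t := by
    revert h; generalize c x = a, c y = b; revert a b; decide
  obtain ⟨z, rfl⟩ := hc t
  exact ⟨z, h, hx, hy⟩

lemma exists_rainbow {c : V → Fin 3} (hc : Surjective c) : ∃ x y z, Rainbow c x y z := by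
  obtain ⟨x, hx⟩ := hc 0
  obtain ⟨y, hy⟩ := hc 1
  obtain ⟨z, hz⟩ := exists_rainbow_of_ne hc (x := x) (y := y) (by simp [hx, hy])
  exact ⟨x, y, z, hz⟩

end Coloring

section Face

variable {ι : Type*} [DecidableEq ι]

def liftFace (s : Finset ι) (u : ι → Bool) (p : {k // k ∉ s} → Bool) : ι → Bool :=
  fun k => if h : k ∈ s then u k else p ⟨k, h⟩

lemma hammingDist_liftFace [Fintype ι] (s : Finset ι) (u : ι → Bool)
    (p q : {k // k ∉ s} → Bool) :
    hammingDist (liftFace s u p) (liftFace s u q) = hammingDist p q := by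
  simp only [hammingDist, card_filter]
  rw [← Fintype.sum_subtype_add_sum_subtype (· ∈ s)]
  have hs (v) (k : {k // k ∈ s}) : liftFace s u v k = u k := dif_pos k.2
  have hsc (v) (k : {k // k ∉ s}) : liftFace s u v k = v k := dif_neg k.2
  simp [hs, hsc]

lemma liftFace_restrict {s : Finset ι} {u w : ι → Bool} (h : ∀ k ∈ s, w k = u k) :
    liftFace s u (fun k => w k) = w := by
  ext k
  by_cases hk : k ∈ s <;> simp [liftFace, hk, h]

lemma exists_rainbow_hammingAP_of_face [Fintype ι] (s : Finset ι)
    (hs : ∀ c' : ({k // k ∉ s} → Bool) → Fin 3, Surjective c' →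
      ∃ x y z, Rainbow c' x y z ∧ hammingDist x y = hammingDist y z)
    {c : (ι → Bool) → Fin 3} {x y z : ι → Bool} (h : Rainbow c x y z)
    (hy : ∀ k ∈ s, y k = x k) (hz : ∀ k ∈ s, z k = x k) :
    ∃ x y z, Rainbow c x y z ∧ hammingDist x y = hammingDist y z := by
  have hsurj : Surjective (c ∘ liftFace s x) := by
    intro t
    rcases h.eq_or_eq_or_eq t with rfl | rfl | rfl
    · exact ⟨fun k => x k, by simp [liftFace_restrict (fun k _ => rfl)]⟩
    · exact ⟨fun k => y k, by simp [liftFace_restrict hy]⟩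
    · exact ⟨fun k => z k, by simp [liftFace_restrict hz]⟩
  obtain ⟨x', y', z', h', hd⟩ := hs _ hsurj
  exact ⟨_, _, _, h', by simpa only [hammingDist_liftFace] using hd⟩

end Face

section Core

variable {ι : Type*} [Fintype ι] {c : (ι → Bool) → Fin 3}

def RainbowAPFree (c : (ι → Bool) → Fin 3) : Prop :=
  ∀ x y z, Rainbow c x y z → hammingDist x y ≠ hammingDist y z

def RainbowCodimTwoFaceFree (c : (ι → Bool) → Fin 3) : Prop :=
  ∀ x y z, Rainbow c x y z → ∀ s : Finset ι, #s = 2 →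
    (∀ k ∈ s, y k = x k) → (∀ k ∈ s, z k = x k) → False

lemma exists_rainbow_hammingAP_of_card_eq_two (h : Fintype.card ι = 2) (hc : Surjective c) :
    ∃ x y z, Rainbow c x y z ∧ hammingDist x y = hammingDist y z := by
  obtain ⟨x, y, z, hr⟩ := exists_rainbow hc
  have hd {u w} (huw : c u ≠ c w) : 1 ≤ hammingDist u w ∧ hammingDist u w ≤ 2 :=
    ⟨hammingDist_pos.mpr (ne_of_apply_ne c huw), h ▸ hammingDist_le_card_fintype⟩
  have := hd hr.1; have := hd hr.2.1; have := hd hr.2.2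
  rcases (by omega : hammingDist x y = hammingDist y z ∨ hammingDist x y = hammingDist x z ∨
    hammingDist x z = hammingDist y z) with h | h | h
  · exact ⟨x, y, z, hr, h⟩
  · exact ⟨y, x, z, ⟨hr.1.symm, hr.2.2, hr.2.1⟩, by rw [hammingDist_comm, h]⟩
  · exact ⟨x, z, y, ⟨hr.2.1, hr.1, hr.2.2.symm⟩, by rw [h, hammingDist_comm]⟩

variable [DecidableEq ι]

lemma color_eq_of_hammingDist_eq (hAP : RainbowAPFree c) {p x u : ι → Bool}
    (hx : Rainbow c p (toggle univ p) x) (hu : hammingDist p u = hammingDist p x) :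
    c u = c x := by
  rcases hx.eq_or_eq_or_eq (c u) with h | h | h
  · refine absurd ?_ (hAP u (toggle univ p) x ⟨h ▸ hx.1, h ▸ hx.2.1, hx.2.2⟩)
    rw [hammingDist_toggle_univ_right, hammingDist_toggle_univ_left, hammingDist_comm, hu]
  · refine absurd ?_ (hAP u p x ⟨h ▸ hx.1.symm, h ▸ hx.2.2, hx.2.1⟩)
    rw [hammingDist_comm, hu]
  · exact h

lemma two_mul_hammingDist_ne (hAP : RainbowAPFree c) {p x : ι → Bool}
    (hx : Rainbow c p (toggle univ p) x) : 2 * hammingDist p x ≠ Fintype.card ι := by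
  intro h
  apply hAP p x (toggle univ p) ⟨hx.2.1, hx.1, hx.2.2.symm⟩
  rw [hammingDist_toggle_univ_right, hammingDist_comm x p]
  omega

lemma hammingDist_eq_one_of_rainbow (hAP : RainbowAPFree c) (hface : RainbowCodimTwoFaceFree c)
    {p v x : ι → Bool} (hv : c v = c p) (hpv : 2 ≤ hammingDist p v)
    (hx : Rainbow c p (toggle univ p) x) : hammingDist p x = 1 := by
  by_contra hx1
  have hx0 : hammingDist p x ≠ 0 := hammingDist_ne_zero.mpr (ne_of_apply_ne c hx.2.1)
  obtain ⟨s, hsv, hs⟩ := exists_subset_card_eq (s := {k | p k ≠ v k}) hpv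
  obtain ⟨W, hsW, -, hW⟩ := exists_subsuperset_card_eq (subset_univ s)
    (n := hammingDist p x) (by omega) (by simpa using hammingDist_le_card_fintype)
  have hw : c (toggle W p) = c x :=
    color_eq_of_hammingDist_eq hAP hx (by rw [hammingDist_toggle, hW])
  -- `toggle W p`, `v` and `p̄` all differ from `p` on `s ⊆ W`
  refine hface (toggle W p) v (toggle univ p)
    ⟨hw ▸ hv ▸ hx.2.1.symm, hw ▸ hx.2.2.symm, hv ▸ hx.1⟩ s hs (fun k hk => ?_)
    (fun k hk => ?_)
  · have hk' := hsv hk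
    simp only [mem_filter, mem_univ, true_and] at hk'
    cases hp : p k <;> cases hv : v k <;> simp_all [hsW hk]
  · simp [hsW hk]

lemma false_of_forall_hammingDist_eq_one (hAP : RainbowAPFree c)
    (hface : RainbowCodimTwoFaceFree c) (hn : 4 ≤ Fintype.card ι) {p x : ι → Bool}
    (hx : Rainbow c p (toggle univ p) x)
    (hT : ∀ y, Rainbow c p (toggle univ p) y → hammingDist p y = 1) : False := by
  obtain ⟨j, k, hjk⟩ := Fintype.exists_pair_of_one_lt_card (by omega : 1 < Fintype.card ι)
  obtain ⟨i, -, hi⟩ := exists_mem_notMem_of_card_lt_card (s := {j, k}) (t := univ)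
    (by rw [card_pair hjk, card_univ]; omega)
  have hw (a : ι) : c (toggle {a} p) = c x :=
    color_eq_of_hammingDist_eq hAP hx (by rw [hammingDist_toggle, card_singleton, hT x hx])
  set v := toggle univ (toggle {j, k} p)
  have hpv : hammingDist p v = Fintype.card ι - 2 := by
    rw [hammingDist_toggle_univ_right, hammingDist_toggle, card_pair hjk]
  rcases hx.eq_or_eq_or_eq (c v) with h | h | h
  · -- both steps of `v, toggle {j} p, p̄` have length `n - 1`
    apply hAP v (toggle {j} p) (toggle univ p)
      ⟨h ▸ hw j ▸ hx.2.1, h ▸ hx.1, hw j ▸ hx.2.2.symm⟩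
    have hjk' : ({j, k} : Finset ι) ∆ {j} = {k} := by
      ext a; by_cases ha : a = j <;> simp [mem_symmDiff, ha, hjk]
    rw [hammingDist_toggle_univ_left, hammingDist_toggle_toggle, hjk',
      hammingDist_toggle_univ_right, hammingDist_comm, hammingDist_toggle, card_singleton,
      card_singleton]
  · refine hface (toggle {i} p) v p
      ⟨hw i ▸ h ▸ hx.2.2.symm, hw i ▸ hx.2.1.symm, h ▸ hx.1.symm⟩ {j, k} (card_pair hjk)
      (fun a ha => ?_) (fun a ha => ?_) <;>
    · have : a ≠ i := by rintro rfl; exact hi ha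
      simp [v, this, ha]
  · have := hT v ⟨hx.1, h ▸ hx.2.1, h ▸ hx.2.2⟩
    omega

lemma false_of_antipodal_ne (hAP : RainbowAPFree c) (hface : RainbowCodimTwoFaceFree c)
    (hn : 4 ≤ Fintype.card ι) (heven : Even (Fintype.card ι)) (hc : Surjective c)
    {p : ι → Bool} (hp : c p ≠ c (toggle univ p)) : False := by
  obtain ⟨x, hx⟩ := exists_rainbow_of_ne hc hp
  obtain ⟨H, -, hH⟩ := exists_subset_card_eq (s := (univ : Finset ι))
    (n := Fintype.card ι / 2) (by simp [Nat.div_le_self])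
  have hpv : 2 * hammingDist p (toggle H p) = Fintype.card ι := by
    rw [hammingDist_toggle, hH]
    exact (Nat.two_mul_div_two_of_even heven)
  rcases hx.eq_or_eq_or_eq (c (toggle H p)) with h | h | h
  · exact false_of_forall_hammingDist_eq_one hAP hface hn hx
      fun y hy => hammingDist_eq_one_of_rainbow hAP hface h (by omega) hy
  · -- the same argument with `p` and `p̄` exchanged
    have hx' : Rainbow c (toggle univ p) (toggle univ (toggle univ p)) x := by
      rw [toggle_univ_toggle_univ]
      exact ⟨hx.1.symm, hx.2.2, hx.2.1⟩
    have hpv' : 2 ≤ hammingDist (toggle univ p) (toggle H p) := by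
      rw [hammingDist_toggle_univ_left]
      omega
    exact false_of_forall_hammingDist_eq_one hAP hface hn hx'
      fun y hy => hammingDist_eq_one_of_rainbow hAP hface h hpv' hy
  · exact two_mul_hammingDist_ne hAP ⟨hx.1, h ▸ hx.2.1, h ▸ hx.2.2⟩ hpv

lemma false_of_antipodal_eq (hface : RainbowCodimTwoFaceFree c) (hn : 4 ≤ Fintype.card ι)
    (hc : Surjective c) (hanti : ∀ v, c (toggle univ v) = c v) : False := by
  obtain ⟨u, w, t, hr⟩ := exists_rainbow hc
  obtain ⟨x, y, hxy, hcxy⟩ := exists_hammingDist_eq_one_ne c hr.1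
  obtain ⟨z, hz⟩ := exists_rainbow_of_ne hc hcxy
  have hz' : Rainbow c x y (toggle univ z) := by simpa only [Rainbow, hanti] using hz
  obtain ⟨a, ha⟩ := card_eq_one.mp hxy
  have hyx (k) (hk : k ∈ univ.erase a) : y k = x k := by
    by_contra h
    have : k ∈ ({k | x k ≠ y k} : Finset ι) := by simpa using Ne.symm h
    rw [ha, mem_singleton] at this
    exact (ne_of_mem_erase hk) this
  have hsplit := card_filter_add_card_filter_not (s := univ.erase a) (fun k => z k = x k)
  rw [card_erase_of_mem (mem_univ a), card_univ] at hsplit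
  rcases (by omega : 2 ≤ #{k ∈ univ.erase a | z k = x k} ∨
    2 ≤ #{k ∈ univ.erase a | ¬ z k = x k}) with h | h
  · obtain ⟨s, hs, hs2⟩ := exists_subset_card_eq h
    exact hface x y z hz s hs2 (fun k hk => hyx k (mem_filter.mp (hs hk)).1)
      fun k hk => (mem_filter.mp (hs hk)).2
  · obtain ⟨s, hs, hs2⟩ := exists_subset_card_eq h
    refine hface x y _ hz' s hs2 (fun k hk => hyx k (mem_filter.mp (hs hk)).1) fun k hk => ?_
    have := (mem_filter.mp (hs hk)).2
    cases hx : x k <;> cases hz : z k <;> simp_all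

end Core

theorem exists_rainbow_hammingAP {ι : Type*} [Fintype ι] [DecidableEq ι]
    (heven : Even (Fintype.card ι)) (h2 : 2 ≤ Fintype.card ι) {c : (ι → Bool) → Fin 3}
    (hc : Surjective c) : ∃ x y z, Rainbow c x y z ∧ hammingDist x y = hammingDist y z := by
  induction hn : Fintype.card ι using Nat.strong_induction_on generalizing ι with
  | _ n ih =>
    subst hn
    obtain h | h : Fintype.card ι = 2 ∨ 4 ≤ Fintype.card ι := by
      obtain ⟨m, hm⟩ := heven; omega
    · exact exists_rainbow_hammingAP_of_card_eq_two h hc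
    by_contra! hAP
    have hface : RainbowCodimTwoFaceFree c := fun x y z hr s hs hy hz => by
      have hκ : Fintype.card {k // k ∉ s} = Fintype.card ι - 2 := by
        rw [Fintype.card_subtype_compl, Fintype.card_coe, hs]
      obtain ⟨x', y', z', hr', hd⟩ := exists_rainbow_hammingAP_of_face s
        (fun c' hc' => ih _ (by omega) (by rw [hκ]; exact heven.tsub even_two) (by omega) hc' rfl)
        hr hy hz
      exact hAP x' y' z' hr' hd
    by_cases hanti : ∀ v, c (toggle univ v) = c v
    · exact false_of_antipodal_eq hface h hc hanti
    · obtain ⟨p, hp⟩ := not_forall.mp hanti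
      exact false_of_antipodal_ne hAP hface h heven hc (Ne.symm hp)

section Hypercube

variable {n : ℕ}

lemma hypercube_adj_iff {x y : Fin n → Bool} : (hypercube n).Adj x y ↔ hammingDist x y = 1 :=
  Iff.rfl

lemma exists_walk_length_eq_hammingDist (x y : Fin n → Bool) :
    ∃ w : (hypercube n).Walk x y, w.length = hammingDist x y := by
  induction hd : hammingDist x y generalizing x with
  | zero => rw [hammingDist_eq_zero.mp hd]; exact ⟨.nil, rfl⟩
  | succ d ih =>
    obtain ⟨u, hxu, huy⟩ := exists_step_toward (v := x) (w := y) (by rintro rfl; simp at hd)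
    obtain ⟨w, hw⟩ := ih u (by omega)
    exact ⟨.cons (hypercube_adj_iff.mpr hxu) w, by simp [hw]⟩

lemma hammingDist_le_length {x y : Fin n → Bool} (w : (hypercube n).Walk x y) :
    hammingDist x y ≤ w.length := by
  induction w with
  | nil => simp
  | cons hadj _ ih =>
    rw [SimpleGraph.Walk.length_cons]
    exact (hammingDist_triangle _ _ _).trans (by rw [hypercube_adj_iff.mp hadj]; omega)

lemma hypercube_reachable (x y : Fin n → Bool) : (hypercube n).Reachable x y :=
  (exists_walk_length_eq_hammingDist x y).elim fun w _ => ⟨w⟩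

lemma hypercube_dist (x y : Fin n → Bool) : (hypercube n).dist x y = hammingDist x y := by
  obtain ⟨w, hw⟩ := exists_walk_length_eq_hammingDist x y
  obtain ⟨w', hw'⟩ := (hypercube_reachable x y).exists_walk_length_eq_dist
  exact le_antisymm (hw ▸ SimpleGraph.dist_le w) (hw' ▸ hammingDist_le_length w')

lemma hasRainbowAP_of_rainbow {α : Type*} {c : (Fin n → Bool) → α} {x y z : Fin n → Bool}
    (h : Rainbow c x y z) (hd : hammingDist x y = hammingDist y z) :
    HasRainbowAP (hypercube n) 3 c := by
  refine ⟨fun i => if i = 0 then x else if i = 1 then y else z, ⟨hammingDist x y, ?_⟩, ?_⟩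
  · intro i hi
    obtain rfl | rfl : i = 0 ∨ i = 1 := by omega
    all_goals simp [hypercube_reachable, hypercube_dist, hd]
  · obtain ⟨hxy, hxz, hyz⟩ := h
    intro i j hi hj hij
    interval_cases i <;> interval_cases j <;> simp_all [eq_comm]

end Hypercube

lemma not_hasRainbowAP_of_card_lt {V α : Type*} [Fintype α] (G : SimpleGraph V) (c : V → α)
    (h : Fintype.card α < 3) : ¬ HasRainbowAP G 3 c := by
  rintro ⟨v, -, hv⟩
  have hinj : Injective fun i : Fin 3 => c (v i) := fun i j hij =>
    Fin.ext (by_contra fun hne => hv i j i.2 j.2 hne hij)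
  have := Fintype.card_le_of_injective _ hinj
  simp only [Fintype.card_fin] at this
  omega

theorem stmt_12 (n : ℕ) (hn : 2 ≤ n) (heven : Even n) :
    aw (hypercube n) 3 = 3 := by
  have h3 (c : (Fin n → Bool) → Fin 3) (hc : Surjective c) :
      HasRainbowAP (hypercube n) 3 c := by
    obtain ⟨x, y, z, hr, hd⟩ :=
      exists_rainbow_hammingAP (by simpa using heven) (by simpa using hn) hc
    exact hasRainbowAP_of_rainbow hr hd
  refine le_antisymm (Nat.sInf_le ⟨by norm_num, h3⟩)
    (le_csInf ⟨3, by norm_num, h3⟩ fun r ⟨hr0, hr⟩ => ?_)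
  by_contra! hr3
  obtain ⟨c, hc⟩ : ∃ c : (Fin n → Bool) → Fin r, Surjective c := by
    refine exists_surjective_iff.mpr
      ⟨⟨fun _ => ⟨0, hr0⟩⟩, Embedding.nonempty_of_card_le ?_⟩
    simp only [Fintype.card_fin, Fintype.card_fun, Fintype.card_bool]
    calc r ≤ 2 ^ 2 := by omega
      _ ≤ 2 ^ n := Nat.pow_le_pow_right two_pos hn
  exact not_hasRainbowAP_of_card_lt _ c (by simpa using hr3) (hr c hc)

end AntiVDW
end

section
/- If G is a graph with a dominating vertex, then aw(G,4) ≤ 5: every surjective 5-coloring of V(G) contains a rainbow 4-AP. -/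
namespace AntiVDW

theorem stmt_16 {V : Type*} [Fintype V] (G : SimpleGraph V)
    (hdom : ∃ v : V, ∀ u : V, u ≠ v → G.Adj v u) :
    aw G 4 ≤ 5 ∧
      ∀ c : V → Fin 5, Function.Surjective c → HasRainbowAP G 4 c := by
  obtain ⟨w, hw⟩ := hdom
  -- basic distance facts
  have hadj : ∀ u : V, u ≠ w → G.Adj w u := hw
  have hreach : ∀ u v : V, G.Reachable u v := by
    intro u v
    by_cases hu : u = w
    · subst hu
      by_cases hv : v = u
      · subst hv; exact SimpleGraph.Reachable.refl _
      · exact (hadj v hv).reachable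
    · by_cases hv : v = w
      · subst hv; exact ((hadj u hu).reachable).symm
      · exact ((hadj u hu).reachable).symm.trans (hadj v hv).reachable
  have hd1 : ∀ u : V, u ≠ w → G.dist w u = 1 := fun u hu =>
    SimpleGraph.dist_eq_one_iff_adj.mpr (hadj u hu)
  have hd2 : ∀ u v : V, u ≠ w → v ≠ w → u ≠ v → ¬ G.Adj u v → G.dist u v = 2 := by
    intro u v hu hv huv hnadj
    have hle : G.dist u v ≤ 2 := by
      have := SimpleGraph.dist_le
        (SimpleGraph.Walk.cons ((hadj u hu).symm) (hadj v hv).toWalk)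
      simpa using this
    have hne0 : G.dist u v ≠ 0 := by
      have := (hreach u v).pos_dist_of_ne huv
      omega
    have hne1 : G.dist u v ≠ 1 := fun h =>
      hnadj (SimpleGraph.dist_eq_one_iff_adj.mp h)
    omega
  -- the main claim
  have main : ∀ c : V → Fin 5, Function.Surjective c → HasRainbowAP G 4 c := by
    intro c hc
    -- representatives
    choose y hy using hc
    set r : Fin 5 → V := fun i => if i = c w then w else y i with hr
    have hcr : ∀ i, c (r i) = i := by
      intro i
      rcases eq_or_ne i (c w) with h | h
      · simp [hr, h]
      · simp [hr, h, hy]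
    have hrw : ∀ i, i ≠ c w → r i ≠ w := by
      intro i hi h
      apply hi
      rw [← hcr i, h]
    set x : Fin 4 → V := fun k => r ((c w).succAbove k) with hx
    have hxw : ∀ k, x k ≠ w := fun k => hrw _ (Fin.succAbove_ne _ k)
    have hcx : ∀ k, c (x k) = (c w).succAbove k := fun k => hcr _
    have hxne : ∀ k l : Fin 4, k ≠ l → c (x k) ≠ c (x l) := by
      intro k l hkl h
      rw [hcx, hcx] at h
      exact hkl (Fin.succAbove_right_injective h)
    have hxcw : ∀ k, c (x k) ≠ c w := by
      intro k
      rw [hcx]; exact Fin.succAbove_ne _ k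
    have hxdist : ∀ k l : Fin 4, k ≠ l → x k ≠ x l := by
      intro k l hkl h
      exact hxne k l hkl (by rw [h])
    by_cases hA : ∃ k l : Fin 4, k ≠ l ∧ G.Adj (x k) (x l)
    · obtain ⟨k, l, hkl, hadjkl⟩ := hA
      obtain ⟨m, hmk, hml⟩ :=
        (by decide : ∀ k l : Fin 4, ∃ m : Fin 4, m ≠ k ∧ m ≠ l) k l
      refine ⟨fun n => if n = 0 then x m else if n = 1 then w
        else if n = 2 then x k else x l, ⟨1, ?_⟩, ?_⟩
      · intro i hi
        have hi3 : i < 3 := by omega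
        clear hi
        interval_cases i <;> simp only [if_true, if_false] <;> norm_num
        · exact ⟨hreach _ _, (hadj (x m) (hxw m)).symm⟩
        · exact ⟨hreach _ _, hadj (x k) (hxw k)⟩
        · exact ⟨hreach _ _, hadjkl⟩
      · intro i j hi hj hij
        interval_cases i <;> interval_cases j <;> simp only [if_true, if_false] <;>
          norm_num <;>
          first
          | exact hxcw m
          | exact hxne m k hmk
          | exact hxne m l hml
          | exact (hxcw m).symm ∘ Eq.symm
          | exact fun h => hxcw m h.symm
          | exact fun h => hxcw k h.symm
          | exact fun h => hxcw l h.symm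
          | exact hxcw k
          | exact hxcw l
          | exact hxne k l hkl
          | exact hxne k m hmk.symm ∘ id
          | exact fun h => hxne m k hmk h.symm
          | exact fun h => hxne m l hml h.symm
          | exact fun h => hxne k l hkl h.symm
          | omega
    · push_neg at hA
      refine ⟨fun n => if n = 0 then x 0 else if n = 1 then x 1
        else if n = 2 then x 2 else x 3, ⟨2, ?_⟩, ?_⟩
      · intro i hi
        have key : ∀ k l : Fin 4, k ≠ l → G.dist (x k) (x l) = 2 := by
          intro k l hkl
          exact hd2 _ _ (hxw k) (hxw l) (hxdist k l hkl) (hA k l hkl)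
        have hi3 : i < 3 := by omega
        clear hi
        interval_cases i <;> simp only [if_true, if_false] <;> norm_num <;>
          exact ⟨hreach _ _, key _ _ (by decide)⟩
      · intro i j hi hj hij
        interval_cases i <;> interval_cases j <;> simp only [if_true, if_false] <;>
          norm_num <;> first
            | exact hxne _ _ (by decide)
            | omega
  refine ⟨?_, main⟩
  exact Nat.sInf_le ⟨by norm_num, main⟩


end AntiVDW
end

section
/- If G is a graph with a dominating vertex, then aw(G,5) ≤ 6: every surjective 6-coloring of V(G) contains a rainbow 5-AP. -/
namespace AntiVDW

-- helpers
def seq5 {V : Type*} (w0 w1 w2 w3 w4 : V) : ℕ → V := fun n =>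
  match n with | 0 => w0 | 1 => w1 | 2 => w2 | 3 => w3 | _ => w4

lemma dist_one {V : Type*} {G : SimpleGraph V} {a b : V} (h : G.Adj a b) :
    G.Reachable a b ∧ G.dist a b = 1 :=
  ⟨h.reachable, SimpleGraph.dist_eq_one_iff_adj.mpr h⟩

lemma dist_two {V : Type*} {G : SimpleGraph V} {v a b : V} (hab : a ≠ b)
    (hna : ¬ G.Adj a b) (hva : G.Adj v a) (hvb : G.Adj v b) :
    G.Reachable a b ∧ G.dist a b = 2 := by
  have hr : G.Reachable a b := hva.symm.reachable.trans hvb.reachable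
  refine ⟨hr, ?_⟩
  have hle : G.dist a b ≤ 2 := by
    have := SimpleGraph.dist_le (SimpleGraph.Walk.cons hva.symm hvb.toWalk)
    simpa using this
  have h0 : G.dist a b ≠ 0 := by
    simp [SimpleGraph.dist_eq_zero_iff_eq_or_not_reachable, hab, hr]
  have h1 : G.dist a b ≠ 1 := fun h => hna (SimpleGraph.dist_eq_one_iff_adj.mp h)
  omega

lemma build {V : Type*} (G : SimpleGraph V) (c : V → Fin 6) (w0 w1 w2 w3 w4 : V) (d : ℕ)
    (h01 : G.Reachable w0 w1 ∧ G.dist w0 w1 = d)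
    (h12 : G.Reachable w1 w2 ∧ G.dist w1 w2 = d)
    (h23 : G.Reachable w2 w3 ∧ G.dist w2 w3 = d)
    (h34 : G.Reachable w3 w4 ∧ G.dist w3 w4 = d)
    (c01 : c w0 ≠ c w1) (c02 : c w0 ≠ c w2) (c03 : c w0 ≠ c w3) (c04 : c w0 ≠ c w4)
    (c12 : c w1 ≠ c w2) (c13 : c w1 ≠ c w3) (c14 : c w1 ≠ c w4)
    (c23 : c w2 ≠ c w3) (c24 : c w2 ≠ c w4) (c34 : c w3 ≠ c w4) :
    HasRainbowAP G 5 c := by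
  refine ⟨seq5 w0 w1 w2 w3 w4, ⟨d, ?_⟩, ?_⟩
  · intro i hi
    have hi4 : i < 4 := by omega
    interval_cases i
    exacts [h01, h12, h23, h34]
  · intro i j hi hj hij
    interval_cases i <;> interval_cases j <;>
      simp only [seq5] <;>
      first
        | exact absurd rfl hij
        | exact c01 | exact c01.symm | exact c02 | exact c02.symm
        | exact c03 | exact c03.symm | exact c04 | exact c04.symm
        | exact c12 | exact c12.symm | exact c13 | exact c13.symm
        | exact c14 | exact c14.symm | exact c23 | exact c23.symm
        | exact c24 | exact c24.symm | exact c34 | exact c34.symm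

lemma key {V : Type*} (G : SimpleGraph V) (v : V) (p : Fin 5 → V)
    (hadj : ∀ i, G.Adj v (p i)) (c : V → Fin 6)
    (hc : ∀ i j, i ≠ j → c (p i) ≠ c (p j)) (hcv : ∀ i, c (p i) ≠ c v) :
    HasRainbowAP G 5 c := by
  classical
  have hinj : ∀ i j : Fin 5, i ≠ j → p i ≠ p j := by
    intro i j hij he; exact hc i j hij (by rw [he])
  by_cases hP3 : ∃ i j k : Fin 5, i ≠ j ∧ j ≠ k ∧ i ≠ k ∧ G.Adj (p i) (p j) ∧ G.Adj (p j) (p k)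
  · obtain ⟨i, j, k, hij, hjk, hik, e1, e2⟩ := hP3
    have h4 : ∀ i j k : Fin 5, ∃ l : Fin 5, l ≠ i ∧ l ≠ j ∧ l ≠ k := by decide
    obtain ⟨l, hl1, hl2, hl3⟩ := h4 i j k
    exact build G c (p i) (p j) (p k) v (p l) 1 (dist_one e1) (dist_one e2)
      (dist_one (hadj k).symm) (dist_one (hadj l))
      (hc i j hij) (hc i k hik) (hcv i) (hc i l (Ne.symm hl1))
      (hc j k hjk) (hcv j) (hc j l (Ne.symm hl2))
      (hcv k) (hc k l (Ne.symm hl3)) (Ne.symm (hcv l))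
  by_cases h2M : ∃ i j k l : Fin 5, i ≠ j ∧ i ≠ k ∧ i ≠ l ∧ j ≠ k ∧ j ≠ l ∧ k ≠ l ∧
      G.Adj (p i) (p j) ∧ G.Adj (p k) (p l)
  · obtain ⟨i, j, k, l, h1, h2, h3, h4, h5, h6, e1, e2⟩ := h2M
    exact build G c (p i) (p j) v (p k) (p l) 1 (dist_one e1) (dist_one (hadj j).symm)
      (dist_one (hadj k)) (dist_one e2)
      (hc i j h1) (hcv i) (hc i k h2) (hc i l h3)
      (hcv j) (hc j k h4) (hc j l h5)
      (Ne.symm (hcv k)) (Ne.symm (hcv l)) (hc k l h6)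
  push_neg at hP3 h2M
  by_cases hE : ∃ i j : Fin 5, i ≠ j ∧ G.Adj (p i) (p j)
  · obtain ⟨i, j, hij, e⟩ := hE
    have h5 : ∀ i j : Fin 5, ∃ k l m : Fin 5, k ≠ i ∧ k ≠ j ∧ l ≠ i ∧ l ≠ j ∧ m ≠ i ∧ m ≠ j ∧
        k ≠ l ∧ k ≠ m ∧ l ≠ m := by decide
    obtain ⟨k, l, m, hk1, hk2, hl1, hl2, hm1, hm2, hkl, hkm, hlm⟩ := h5 i j
    have n1 : ¬ G.Adj (p i) (p k) := fun h => hP3 k i j hk1 hij hk2 h.symm e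
    have n2 : ¬ G.Adj (p k) (p j) := fun h => hP3 k j i hk2 (Ne.symm hij) hk1 h e.symm
    have n3 : ¬ G.Adj (p j) (p l) := fun h => hP3 i j l hij (Ne.symm hl2) (Ne.symm hl1) e h
    have n4 : ¬ G.Adj (p l) (p m) := fun h =>
      h2M i j l m hij (Ne.symm hl1) (Ne.symm hm1) (Ne.symm hl2) (Ne.symm hm2) hlm e h
    exact build G c (p i) (p k) (p j) (p l) (p m) 2
      (dist_two (hinj i k (Ne.symm hk1)) n1 (hadj i) (hadj k))
      (dist_two (hinj k j hk2) n2 (hadj k) (hadj j))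
      (dist_two (hinj j l (Ne.symm hl2)) n3 (hadj j) (hadj l))
      (dist_two (hinj l m hlm) n4 (hadj l) (hadj m))
      (hc i k (Ne.symm hk1)) (hc i j hij) (hc i l (Ne.symm hl1)) (hc i m (Ne.symm hm1))
      (hc k j hk2) (hc k l hkl) (hc k m hkm)
      (hc j l (Ne.symm hl2)) (hc j m (Ne.symm hm2)) (hc l m hlm)
  · push_neg at hE
    exact build G c (p 0) (p 1) (p 2) (p 3) (p 4) 2
      (dist_two (hinj 0 1 (by decide)) (hE 0 1 (by decide)) (hadj 0) (hadj 1))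
      (dist_two (hinj 1 2 (by decide)) (hE 1 2 (by decide)) (hadj 1) (hadj 2))
      (dist_two (hinj 2 3 (by decide)) (hE 2 3 (by decide)) (hadj 2) (hadj 3))
      (dist_two (hinj 3 4 (by decide)) (hE 3 4 (by decide)) (hadj 3) (hadj 4))
      (hc 0 1 (by decide)) (hc 0 2 (by decide)) (hc 0 3 (by decide)) (hc 0 4 (by decide))
      (hc 1 2 (by decide)) (hc 1 3 (by decide)) (hc 1 4 (by decide))
      (hc 2 3 (by decide)) (hc 2 4 (by decide)) (hc 3 4 (by decide))

theorem stmt_17 {V : Type*} [Fintype V] (G : SimpleGraph V)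
    (hdom : ∃ v : V, ∀ u : V, u ≠ v → G.Adj v u) :
    aw G 5 ≤ 6 ∧
      ∀ c : V → Fin 6, Function.Surjective c → HasRainbowAP G 5 c := by

  obtain ⟨v, hv⟩ := hdom
  have main : ∀ c : V → Fin 6, Function.Surjective c → HasRainbowAP G 5 c := by
    intro c hsurj
    choose rep hrep using hsurj
    set i0 : Fin 6 := c v with hi0
    set p : Fin 5 → V := fun i => rep (i0.succAbove i) with hp
    have hcp : ∀ i, c (p i) = i0.succAbove i := fun i => hrep _
    have hpne : ∀ i, p i ≠ v := by
      intro i he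
      have := hcp i; rw [he] at this
      exact (Fin.succAbove_ne i0 i) (by rw [← this, hi0])
    refine key G v p (fun i => hv _ (hpne i)) c ?_ ?_
    · intro i j hij h
      rw [hcp i, hcp j] at h
      exact hij (Fin.succAbove_right_injective h)
    · intro i h
      rw [hcp i, ← hi0] at h
      exact Fin.succAbove_ne i0 i h
  refine ⟨Nat.sInf_le ⟨by norm_num, main⟩, main⟩


end AntiVDW
end

section
/- For the star K_{1,n} and any k with 4 ≤ k ≤ n+1, aw(K_{1,n}, k) = k+1. -/
namespace AntiVDW

/-- The star `K_{1,n}`: the center is `none`, the leaves are `some i`. -/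
def star (n : ℕ) : SimpleGraph (Option (Fin n)) :=
  SimpleGraph.fromRel fun a _ => a = none

lemma star_adj {n : ℕ} {a b : Option (Fin n)} :
    (star n).Adj a b ↔ a ≠ b ∧ (a = none ∨ b = none) := by
  simp [star, SimpleGraph.fromRel_adj]

lemma star_adj_none_some {n : ℕ} (i : Fin n) : (star n).Adj none (some i) := by
  simp [star_adj]

lemma star_not_adj_some_some {n : ℕ} (i j : Fin n) :
    ¬ (star n).Adj (some i) (some j) := by
  simp [star_adj]

lemma star_reachable {n : ℕ} (a b : Option (Fin n)) : (star n).Reachable a b := by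
  have h : ∀ x : Option (Fin n), (star n).Reachable none x := by
    intro x
    match x with
    | none => exact SimpleGraph.Reachable.refl _
    | some i => exact (star_adj_none_some i).reachable
  exact (h a).symm.trans (h b)

lemma star_dist_none_some {n : ℕ} (i : Fin n) :
    (star n).dist none (some i) = 1 :=
  SimpleGraph.dist_eq_one_iff_adj.mpr (star_adj_none_some i)

lemma star_dist_some_none {n : ℕ} (i : Fin n) :
    (star n).dist (some i) none = 1 :=
  SimpleGraph.dist_eq_one_iff_adj.mpr (star_adj_none_some i).symm

lemma star_dist_some_some {n : ℕ} {i j : Fin n} (h : i ≠ j) :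
    (star n).dist (some i) (some j) = 2 := by
  have hle : (star n).dist (some i) (some j) ≤ 2 := by
    simpa using SimpleGraph.dist_le
      (SimpleGraph.Walk.cons (star_adj_none_some i).symm
        (SimpleGraph.Walk.cons (star_adj_none_some j) SimpleGraph.Walk.nil))
  have hne0 : (star n).dist (some i) (some j) ≠ 0 := fun h0 =>
    h (Option.some_injective _ (((star_reachable _ _).dist_eq_zero_iff).mp h0))
  have hne1 : (star n).dist (some i) (some j) ≠ 1 := fun h1 =>
    star_not_adj_some_some i j (SimpleGraph.dist_eq_one_iff_adj.mp h1)
  omega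

lemma mem_aw_set (n k : ℕ) :
    ∀ c : Option (Fin n) → Fin (k + 1), Function.Surjective c → HasRainbowAP (star n) k c := by
  intro c hc
  have hpick : ∀ i : Fin k, ∃ x : Fin n, c (some x) = (c none).succAbove i := by
    intro i
    obtain ⟨w, hw⟩ := hc ((c none).succAbove i)
    match w with
    | none => exact absurd hw.symm (Fin.succAbove_ne _ i)
    | some x => exact ⟨x, hw⟩
  choose ℓ hℓ using hpick
  by_cases hk0 : 0 < k
  swap
  · exact ⟨fun _ => none, ⟨0, by omega⟩, by omega⟩
  refine ⟨fun m => some (ℓ (if h : m < k then ⟨m, h⟩ else ⟨0, hk0⟩)), ⟨2, ?_⟩, ?_⟩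
  · intro i hi
    have h1 : i < k := by omega
    simp only [dif_pos h1, dif_pos hi]
    have hne : ℓ ⟨i, h1⟩ ≠ ℓ ⟨i + 1, hi⟩ := by
      intro he
      have := (hℓ ⟨i, h1⟩).symm.trans (he ▸ hℓ ⟨i + 1, hi⟩)
      have := Fin.succAbove_right_injective (p := c none) this
      simp at this
    exact ⟨star_reachable _ _, star_dist_some_some hne⟩
  · intro i j hi hj hij
    simp only [dif_pos hi, dif_pos hj, hℓ]
    intro he
    have := Fin.succAbove_right_injective (p := c none) he
    simp at this
    omega

lemma not_mem_aw_set (n k r : ℕ) (hk : 4 ≤ k) (hkn : k ≤ n + 1) (hr1 : 0 < r) (hrk : r ≤ k) :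
    ∃ c : Option (Fin n) → Fin r, Function.Surjective c ∧ ¬ HasRainbowAP (star n) k c := by
  have hn : k - 1 ≤ n := by omega
  refine ⟨fun a => match a with
    | none => ⟨r - 1, by omega⟩
    | some i => ⟨min i.val (r - 2), by omega⟩, ?_, ?_⟩
  · rintro ⟨t, ht⟩
    by_cases h : t = r - 1
    · exact ⟨none, by simp [h]⟩
    · refine ⟨some ⟨t, by omega⟩, ?_⟩
      simp only
      congr 1
      omega
  · rintro ⟨v, ⟨d, hd⟩, hrb⟩
    set c : Option (Fin n) → Fin r := fun a => match a with
      | none => ⟨r - 1, by omega⟩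
      | some i => ⟨min i.val (r - 2), by omega⟩ with hc
    have hinj : Function.Injective (fun i : Fin k => c (v i.val)) := by
      intro a b hab
      by_contra hne
      exact hrb a.val b.val a.isLt b.isLt (by simpa [Fin.ext_iff] using hne) hab
    have hcard := Fintype.card_le_of_injective _ hinj
    simp at hcard
    -- so r = k
    have hrk' : r = k := by omega
    subst hrk'
    have hsurj : Function.Surjective (fun i : Fin r => c (v i.val)) :=
      Finite.surjective_of_injective hinj
    obtain ⟨i₀, hi₀⟩ := hsurj ⟨r - 1, by omega⟩
    -- v i₀ is the center
    have hvnone : v i₀.val = none := by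
      rcases he : v i₀.val with _ | x
      · rfl
      · exfalso
        simp only [he, hc, Fin.mk.injEq] at hi₀
        omega
    -- any other position is a leaf
    have hleaf : ∀ m, m < r → m ≠ i₀.val → v m ≠ none := by
      intro m hm hmi he
      exact hrb m i₀.val hm i₀.isLt hmi (by rw [he, hvnone])
    -- d = 1 using a pair touching i₀
    have hd1 : d = 1 := by
      by_cases h : i₀.val + 1 < r
      · obtain ⟨-, hdist⟩ := hd i₀.val h
        rcases he : v (i₀.val + 1) with _ | x
        · exact absurd he (hleaf _ h (by omega))
        · rw [hvnone, he, star_dist_none_some] at hdist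
          omega
      · have h2 : i₀.val = r - 1 := by omega
        have h3 : r - 2 + 1 < r := by omega
        obtain ⟨-, hdist⟩ := hd (r - 2) h3
        have h4 : r - 2 + 1 = i₀.val := by omega
        rcases he : v (r - 2) with _ | x
        · exact absurd he (hleaf _ (by omega) (by omega))
        · rw [h4, hvnone, he, star_dist_some_none] at hdist
          omega
    -- d = 2 using a pair avoiding i₀
    obtain ⟨j, hj1, hj2, hj3⟩ : ∃ j, j + 1 < r ∧ j ≠ i₀.val ∧ j + 1 ≠ i₀.val := by
      by_cases h : i₀.val ≤ 1
      · exact ⟨2, by omega, by omega, by omega⟩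
      · exact ⟨0, by omega, by omega, by omega⟩
    obtain ⟨-, hdist⟩ := hd j hj1
    rcases he1 : v j with _ | x
    · exact absurd he1 (hleaf _ (by omega) hj2)
    rcases he2 : v (j + 1) with _ | y
    · exact absurd he2 (hleaf _ hj1 hj3)
    have hxy : x ≠ y := by
      intro h
      exact hrb j (j + 1) (by omega) hj1 (by omega) (by rw [he1, he2, h])
    rw [he1, he2, star_dist_some_some hxy] at hdist
    omega

theorem stmt_18 (n k : ℕ) (hk : 4 ≤ k) (hkn : k ≤ n + 1) :
    aw (star n) k = k + 1 := by
  unfold aw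
  have hS1 : (k + 1) ∈ {r : ℕ | 0 < r ∧ ∀ c : Option (Fin n) → Fin r,
      Function.Surjective c → HasRainbowAP (star n) k c} :=
    ⟨Nat.succ_pos k, mem_aw_set n k⟩
  apply le_antisymm
  · exact Nat.sInf_le hS1
  · by_contra h
    push_neg at h
    have hmem := Nat.sInf_mem ⟨k + 1, hS1⟩
    obtain ⟨hpos, hall⟩ := hmem
    obtain ⟨c, hsurj, hno⟩ := not_mem_aw_set n k _ hk hkn hpos (by omega)
    exact hno (hall c hsurj)

end AntiVDW
end

section
/- For m, n ≥ k ≥ 2, the complete bipartite graph satisfies aw(K_{m,n}, k) = k + ⌊k/2⌋ − 1. -/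
namespace AntiVDW

variable {m n k r s : ℕ}

abbrev KG (m n : ℕ) := completeBipartiteGraph (Fin m) (Fin n)

lemma adj_lr (a : Fin m) (b : Fin n) : (KG m n).Adj (.inl a) (.inr b) := by simp

lemma reach (hm : 0 < m) (hn : 0 < n) (u w : Fin m ⊕ Fin n) : (KG m n).Reachable u w := by
  have hb : (KG m n).Reachable (Sum.inl ⟨0, hm⟩) (Sum.inr ⟨0, hn⟩) := (adj_lr _ _).reachable
  rcases u with a | b <;> rcases w with a' | b'
  · exact ((adj_lr a ⟨0,hn⟩).reachable).trans ((adj_lr a' ⟨0,hn⟩).reachable).symm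
  · exact (adj_lr a b').reachable
  · exact ((adj_lr a' b).reachable).symm
  · exact ((adj_lr ⟨0,hm⟩ b).reachable).symm.trans (adj_lr ⟨0,hm⟩ b').reachable

lemma dist_lr (a : Fin m) (b : Fin n) : (KG m n).dist (.inl a) (.inr b) = 1 :=
  SimpleGraph.dist_eq_one_iff_adj.mpr (adj_lr a b)

lemma dist_ll (hn : 0 < n) {a a' : Fin m} (h : a ≠ a') : (KG m n).dist (.inl a) (.inl a') = 2 := by
  let w : (KG m n).Walk (.inl a) (.inl a') :=
    .cons (adj_lr a ⟨0,hn⟩) (.cons ((adj_lr a' ⟨0,hn⟩).symm) .nil)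
  have hle : (KG m n).dist (.inl a) (.inl a') ≤ 2 := by
    have h2 := SimpleGraph.dist_le w
    simpa [w, SimpleGraph.Walk.length_cons] using h2
  have h0 : (KG m n).dist (.inl a) (.inl a') ≠ 0 := by
    intro h'
    rcases SimpleGraph.dist_eq_zero_iff_eq_or_not_reachable.mp h' with h'' | h''
    · exact h (by simpa using h'')
    · exact h'' w.reachable
  have h1 : (KG m n).dist (.inl a) (.inl a') ≠ 1 := by
    intro h'
    have := SimpleGraph.dist_eq_one_iff_adj.mp h'
    simp at this
  omega

lemma dist_rr (hm : 0 < m) {b b' : Fin n} (h : b ≠ b') : (KG m n).dist (.inr b) (.inr b') = 2 := by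
  let w : (KG m n).Walk (.inr b) (.inr b') :=
    .cons ((adj_lr ⟨0,hm⟩ b).symm) (.cons (adj_lr ⟨0,hm⟩ b') .nil)
  have hle : (KG m n).dist (.inr b) (.inr b') ≤ 2 := by
    have h2 := SimpleGraph.dist_le w
    simpa [w, SimpleGraph.Walk.length_cons] using h2
  have h0 : (KG m n).dist (.inr b) (.inr b') ≠ 0 := by
    intro h'
    rcases SimpleGraph.dist_eq_zero_iff_eq_or_not_reachable.mp h' with h'' | h''
    · exact h (by simpa using h'')
    · exact h'' w.reachable
  have h1 : (KG m n).dist (.inr b) (.inr b') ≠ 1 := by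
    intro h'
    have := SimpleGraph.dist_eq_one_iff_adj.mp h'
    simp at this
  omega

lemma dist_le_two (hm : 0 < m) (hn : 0 < n) (u w : Fin m ⊕ Fin n) : (KG m n).dist u w ≤ 2 := by
  rcases u with a | b <;> rcases w with a' | b'
  · rcases eq_or_ne a a' with rfl | h
    · simp [SimpleGraph.dist_self]
    · exact (dist_ll hn h).le
  · exact (dist_lr a b').le.trans one_le_two
  · rw [SimpleGraph.dist_comm]; exact (dist_lr a' b).le.trans one_le_two
  · rcases eq_or_ne b b' with rfl | h
    · simp [SimpleGraph.dist_self]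
    · exact (dist_rr hm h).le

lemma rainbow_of_adj {c : (Fin m ⊕ Fin n) → Fin r} (v : ℕ → Fin m ⊕ Fin n)
    (hadj : ∀ i, i + 1 < k → (KG m n).Adj (v i) (v (i+1)))
    (hcol : ∀ i j, i < k → j < k → i ≠ j → c (v i) ≠ c (v j)) :
    HasRainbowAP (KG m n) k c :=
  ⟨v, ⟨1, fun i hi => ⟨(hadj i hi).reachable, SimpleGraph.dist_eq_one_iff_adj.mpr (hadj i hi)⟩⟩, hcol⟩

/-- Build a rainbow AP with difference 2 from distinct-colored picks with pairwise distance two. -/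

lemma rainbow_of_one {c : (Fin m ⊕ Fin n) → Fin r} (hk : 2 ≤ k)
    (p : Fin r → Fin m ⊕ Fin n) (S : Finset (Fin r))
    (h2 : ∀ s t : Fin r, p s ≠ p t → (KG m n).Reachable (p s) (p t) ∧ (KG m n).dist (p s) (p t) = 2)
    (hp : ∀ t ∈ S, c (p t) = t) (hSc : k ≤ S.card) :
    HasRainbowAP (KG m n) k c := by
  obtain ⟨T, hTS, hTc⟩ := Finset.exists_subset_card_eq hSc
  have hk0 : 0 < k := by omega
  set e := T.orderIsoOfFin hTc with he
  refine ⟨fun i => p (e ⟨i % k, Nat.mod_lt _ hk0⟩), ⟨2, ?_⟩, ?_⟩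
  · intro i hi
    have hne : (e ⟨i % k, Nat.mod_lt _ hk0⟩ : Fin r) ≠ (e ⟨(i+1) % k, Nat.mod_lt _ hk0⟩ : Fin r) := by
      intro h
      have h4 := e.injective (Subtype.ext h)
      simp only [Fin.mk.injEq] at h4
      rw [Nat.mod_eq_of_lt (by omega : i < k), Nat.mod_eq_of_lt hi] at h4
      omega
    have hpne : p (e ⟨i % k, Nat.mod_lt _ hk0⟩) ≠ p (e ⟨(i+1) % k, Nat.mod_lt _ hk0⟩) := by
      intro h
      apply hne
      rw [← hp _ (hTS (e ⟨i % k, Nat.mod_lt _ hk0⟩).2)]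
      rw [h]
      exact hp _ (hTS (e _).2)
    exact h2 _ _ hpne
  · intro i j hi hj hij
    rw [hp _ (hTS (e _).2), hp _ (hTS (e _).2)]
    intro h
    have h4 := e.injective (Subtype.ext h)
    simp only [Fin.mk.injEq] at h4
    rw [Nat.mod_eq_of_lt hi, Nat.mod_eq_of_lt hj] at h4
    exact hij h4

/-- Build a rainbow AP with difference 1 from two disjoint color sets with adjacent picks. -/

lemma rainbow_of_two {c : (Fin m ⊕ Fin n) → Fin r} (hk : 2 ≤ k)
    (pA pB : Fin r → Fin m ⊕ Fin n) (A B : Finset (Fin r))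
    (hadj : ∀ s t : Fin r, (KG m n).Adj (pA s) (pB t))
    (hpA : ∀ t ∈ A, c (pA t) = t) (hpB : ∀ t ∈ B, c (pB t) = t)
    (hdisj : Disjoint A B) (hAc : A.card = k - k / 2) (hBc : B.card = k / 2) :
    HasRainbowAP (KG m n) k c := by
  have hA0 : 0 < k - k / 2 := by omega
  have hB0 : 0 < k / 2 := by omega
  set eA := A.orderIsoOfFin hAc with heA
  set eB := B.orderIsoOfFin hBc with heB
  set fA : ℕ → Fin r := fun t => (eA ⟨t % (k - k/2), Nat.mod_lt _ hA0⟩ : Fin r) with hfA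
  set fB : ℕ → Fin r := fun t => (eB ⟨t % (k/2), Nat.mod_lt _ hB0⟩ : Fin r) with hfB
  have hfAmem : ∀ t, fA t ∈ A := fun t => (eA _).2
  have hfBmem : ∀ t, fB t ∈ B := fun t => (eB _).2
  have hfAinj : ∀ s t, s < k - k/2 → t < k - k/2 → fA s = fA t → s = t := by
    intro s t hs ht h
    have h4 := eA.injective (Subtype.ext h)
    simp only [Fin.mk.injEq] at h4
    rw [Nat.mod_eq_of_lt hs, Nat.mod_eq_of_lt ht] at h4
    exact h4
  have hfBinj : ∀ s t, s < k/2 → t < k/2 → fB s = fB t → s = t := by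
    intro s t hs ht h
    have h4 := eB.injective (Subtype.ext h)
    simp only [Fin.mk.injEq] at h4
    rw [Nat.mod_eq_of_lt hs, Nat.mod_eq_of_lt ht] at h4
    exact h4
  set v : ℕ → Fin m ⊕ Fin n := fun i => if Even i then pA (fA (i/2)) else pB (fB (i/2)) with hv
  have hcv : ∀ i, i < k → c (v i) = if Even i then fA (i/2) else fB (i/2) := by
    intro i hi
    by_cases h : Even i
    · simp only [hv, if_pos h]; exact hpA _ (hfAmem _)
    · simp only [hv, if_neg h]; exact hpB _ (hfBmem _)
  apply rainbow_of_adj v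
  · intro i hi
    by_cases h : Even i
    · have h1 : ¬ Even (i+1) := by simp [Nat.even_add_one, h]
      simp only [hv, if_pos h, if_neg h1]
      exact hadj _ _
    · have h1 : Even (i+1) := by simp [Nat.even_add_one, h]
      simp only [hv, if_neg h, if_pos h1]
      exact (hadj _ _).symm
  · intro i j hi hj hij
    rw [hcv i hi, hcv j hj]
    have hAi : ∀ l, l < k → Even l → l / 2 < k - k/2 := by intro l hl he; rcases he with ⟨t, rfl⟩; omega
    have hBi : ∀ l, l < k → ¬ Even l → l / 2 < k / 2 := by
      intro l hl he
      have : l % 2 = 1 := Nat.not_even_iff.mp he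
      omega
    by_cases h1 : Even i <;> by_cases h2 : Even j
    · simp only [if_pos h1, if_pos h2]
      intro h
      have := hfAinj _ _ (hAi i hi h1) (hAi j hj h2) h
      rcases h1 with ⟨t, rfl⟩; rcases h2 with ⟨s, rfl⟩; omega
    · simp only [if_pos h1, if_neg h2]
      intro h
      exact (Finset.disjoint_left.mp hdisj (h ▸ hfAmem (i/2)) (hfBmem (j/2)))
    · simp only [if_neg h1, if_pos h2]
      intro h
      exact (Finset.disjoint_left.mp hdisj (hfAmem (j/2)) (h ▸ hfBmem (i/2)))
    · simp only [if_neg h1, if_neg h2]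
      intro h
      have := hfBinj _ _ (hBi i hi h1) (hBi j hj h2) h
      have hi2 : i % 2 = 1 := Nat.not_even_iff.mp h1
      have hj2 : j % 2 = 1 := Nat.not_even_iff.mp h2
      omega

lemma upper (hk : 2 ≤ k) (hm : k ≤ m) (hn : k ≤ n)
    (c : (Fin m ⊕ Fin n) → Fin (k + k / 2 - 1)) (hc : Function.Surjective c) :
    HasRainbowAP (KG m n) k c := by
  classical
  have hm0 : 0 < m := by omega
  have hn0 : 0 < n := by omega
  set pX : Fin (k + k / 2 - 1) → Fin m := fun t =>
    if h : ∃ a : Fin m, c (Sum.inl a) = t then h.choose else ⟨0, hm0⟩ with hpXdef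
  set pY : Fin (k + k / 2 - 1) → Fin n := fun t =>
    if h : ∃ b : Fin n, c (Sum.inr b) = t then h.choose else ⟨0, hn0⟩ with hpYdef
  set CX : Finset (Fin (k + k / 2 - 1)) := Finset.univ.image (fun a : Fin m => c (Sum.inl a)) with hCX
  set CY : Finset (Fin (k + k / 2 - 1)) := Finset.univ.image (fun b : Fin n => c (Sum.inr b)) with hCY
  have hpX : ∀ t ∈ CX, c (Sum.inl (pX t)) = t := by
    intro t ht
    rw [hCX, Finset.mem_image] at ht
    obtain ⟨a, -, ha⟩ := ht
    have hex : ∃ a : Fin m, c (Sum.inl a) = t := ⟨a, ha⟩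
    simp only [hpXdef, dif_pos hex]
    exact hex.choose_spec
  have hpY : ∀ t ∈ CY, c (Sum.inr (pY t)) = t := by
    intro t ht
    rw [hCY, Finset.mem_image] at ht
    obtain ⟨b, -, hb⟩ := ht
    have hex : ∃ b : Fin n, c (Sum.inr b) = t := ⟨b, hb⟩
    simp only [hpYdef, dif_pos hex]
    exact hex.choose_spec
  have hunion : CX ∪ CY = Finset.univ := by
    apply Finset.eq_univ_of_forall
    intro t
    obtain ⟨u, hu⟩ := hc t
    rcases u with a | b
    · exact Finset.mem_union_left _ (Finset.mem_image.mpr ⟨a, Finset.mem_univ _, hu⟩)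
    · exact Finset.mem_union_right _ (Finset.mem_image.mpr ⟨b, Finset.mem_univ _, hu⟩)
  have hucard : (CX ∪ CY).card = k + k / 2 - 1 := by rw [hunion]; simp
  have hsum : k + k / 2 - 1 ≤ CX.card + CY.card := by
    have h3 := Finset.card_union_le CX CY
    omega
  have h2X : ∀ s t : Fin (k + k/2 - 1), (Sum.inl (pX s) : Fin m ⊕ Fin n) ≠ Sum.inl (pX t) →
      (KG m n).Reachable (Sum.inl (pX s)) (Sum.inl (pX t)) ∧
        (KG m n).dist (Sum.inl (pX s) : Fin m ⊕ Fin n) (Sum.inl (pX t)) = 2 := by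
    intro s t hst
    have : pX s ≠ pX t := fun h => hst (by rw [h])
    exact ⟨reach hm0 hn0 _ _, dist_ll hn0 this⟩
  have h2Y : ∀ s t : Fin (k + k/2 - 1), (Sum.inr (pY s) : Fin m ⊕ Fin n) ≠ Sum.inr (pY t) →
      (KG m n).Reachable (Sum.inr (pY s) : Fin m ⊕ Fin n) (Sum.inr (pY t)) ∧
        (KG m n).dist (Sum.inr (pY s) : Fin m ⊕ Fin n) (Sum.inr (pY t)) = 2 := by
    intro s t hst
    have : pY s ≠ pY t := fun h => hst (by rw [h])
    exact ⟨reach hm0 hn0 _ _, dist_rr hm0 this⟩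
  by_cases hX : k ≤ CX.card
  · exact rainbow_of_one hk (fun t => Sum.inl (pX t)) CX h2X hpX hX
  by_cases hY : k ≤ CY.card
  · exact rainbow_of_one hk (fun t => Sum.inr (pY t)) CY h2Y hpY hY
  push_neg at hX hY
  by_cases hbig : k - k / 2 ≤ CX.card
  · -- A from CX, B from CY \ CX
    obtain ⟨A, hAsub, hAc⟩ := Finset.exists_subset_card_eq hbig
    have hBcard : k / 2 ≤ (CY \ CX).card := by
      have := Finset.card_sdiff_add_card CY CX
      have h2 : (CY ∪ CX).card = k + k / 2 - 1 := by rw [Finset.union_comm]; exact hucard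
      omega
    obtain ⟨B, hBsub, hBc⟩ := Finset.exists_subset_card_eq hBcard
    refine rainbow_of_two hk (fun t => Sum.inl (pX t)) (fun t => Sum.inr (pY t)) A B
      (fun s t => adj_lr _ _) (fun t ht => hpX t (hAsub ht))
      (fun t ht => hpY t (Finset.mem_sdiff.mp (hBsub ht)).1) ?_ hAc hBc
    rw [Finset.disjoint_left]
    intro t htA htB
    exact (Finset.mem_sdiff.mp (hBsub htB)).2 (hAsub htA)
  · push_neg at hbig
    have hYbig : k - k / 2 ≤ CY.card := by omega
    obtain ⟨A, hAsub, hAc⟩ := Finset.exists_subset_card_eq hYbig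
    have hBcard : k / 2 ≤ (CX \ CY).card := by
      have := Finset.card_sdiff_add_card CX CY
      omega
    obtain ⟨B, hBsub, hBc⟩ := Finset.exists_subset_card_eq hBcard
    refine rainbow_of_two hk (fun t => Sum.inr (pY t)) (fun t => Sum.inl (pX t)) A B
      (fun s t => (adj_lr _ _).symm) (fun t ht => hpY t (hAsub ht))
      (fun t ht => hpX t (Finset.mem_sdiff.mp (hBsub ht)).1) ?_ hAc hBc
    rw [Finset.disjoint_left]
    intro t htA htB
    exact (Finset.mem_sdiff.mp (hBsub htB)).2 (hAsub htA)

lemma no_rainbow_of_few (c : Fin m ⊕ Fin n → Fin s) (hsk : s < k) :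
    ¬ HasRainbowAP (KG m n) k c := by
  rintro ⟨v, -, hcol⟩
  have hinj : Function.Injective (fun i : Fin k => c (v i)) := by
    intro i j h
    by_contra hne
    exact hcol i j i.isLt j.isLt (fun h' => hne (Fin.ext h')) h
  have := Fintype.card_le_of_injective _ hinj
  simp at this
  omega

lemma lower_small (hk : 2 ≤ k) (hm : k ≤ m) (hs : 0 < s) (hsk : s < k) :
    ∃ c : Fin m ⊕ Fin n → Fin s, Function.Surjective c ∧ ¬ HasRainbowAP (KG m n) k c := by
  refine ⟨fun u => Sum.rec (fun a => ⟨min a.val (s-1), by omega⟩)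
    (fun b => ⟨min b.val (s-1), by omega⟩) u, ?_, no_rainbow_of_few _ hsk⟩
  intro t
  refine ⟨Sum.inl ⟨t.val, by omega⟩, ?_⟩
  have := t.isLt
  exact Fin.ext (by simp; omega)

lemma lower_mid (hk : 2 ≤ k) (hm : k ≤ m) (hn : k ≤ n) (hs : k ≤ s) (hs2 : s ≤ k + k / 2 - 2) :
    ∃ c : Fin m ⊕ Fin n → Fin s, Function.Surjective c ∧ ¬ HasRainbowAP (KG m n) k c := by
  have hk4 : 4 ≤ k := by omega
  have hm0 : 0 < m := by omega
  have hn0 : 0 < n := by omega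
  refine ⟨fun u => Sum.rec (fun a => ⟨min a.val (k-2), by omega⟩)
    (fun b => ⟨k - 1 + min b.val (s - k), by omega⟩) u, ?_, ?_⟩
  · -- surjectivity
    intro t
    have ht := t.isLt
    by_cases h : t.val ≤ k - 2
    · exact ⟨Sum.inl ⟨t.val, by omega⟩, Fin.ext (by simp; omega)⟩
    · refine ⟨Sum.inr ⟨t.val - (k-1), by omega⟩, Fin.ext (by simp; omega)⟩
  · -- no rainbow AP
    set c : Fin m ⊕ Fin n → Fin s := fun u => Sum.rec (fun a => ⟨min a.val (k-2), by omega⟩)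
      (fun b => ⟨k - 1 + min b.val (s - k), by omega⟩) u with hc
    rintro ⟨v, ⟨d, hAP⟩, hcol⟩
    have hvl : ∀ u : Fin m ⊕ Fin n, u.isLeft → (c u).val ≤ k - 2 := by
      rintro (a | b) h
      · simp [hc] <;> omega
      · simp at h
    have hvr : ∀ u : Fin m ⊕ Fin n, ¬ u.isLeft = true → k - 1 ≤ (c u).val := by
      rintro (a | b) h
      · simp at h
      · simp [hc]
    have h01 := hAP 0 (by omega)
    -- d ≤ 2
    have hd2 : d ≤ 2 := by
      have := dist_le_two hm0 hn0 (v 0) (v (0+1))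
      omega
    interval_cases d
    · -- d = 0 : v 0 = v 1
      have : v 0 = v 1 := (h01.1.dist_eq_zero_iff).mp h01.2
      exact hcol 0 1 (by omega) (by omega) (by omega) (by rw [this])
    · -- d = 1 : alternating
      have hadj : ∀ i, i + 1 < k → (KG m n).Adj (v i) (v (i+1)) := by
        intro i hi
        exact SimpleGraph.dist_eq_one_iff_adj.mp (hAP i hi).2
      have hflip : ∀ i, i + 1 < k → (v (i+1)).isLeft = !(v i).isLeft := by
        intro i hi
        have h := hadj i hi
        rcases hvi : v i with a | b <;> rcases hvi1 : v (i+1) with a' | b' <;>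
          rw [hvi, hvi1] at h <;> simp_all
      have hside : ∀ i, i < k →
          (v i).isLeft = (if Even i then (v 0).isLeft else !(v 0).isLeft) := by
        intro i
        induction i with
        | zero => intro _; simp
        | succ i ih =>
          intro hi
          rw [hflip i hi, ih (by omega)]
          rcases Nat.even_or_odd i with he | ho
          · simp [he, Nat.even_add_one]
          · have : ¬ Even i := Nat.not_even_iff_odd.mpr ho
            simp [this, Nat.even_add_one]
      -- in either case, find k/2 positions on the right side
      have key : ∀ p : ℕ → ℕ, (∀ t, t < k / 2 → p t < k) →
          (∀ t t', t < k / 2 → t' < k / 2 → t ≠ t' → p t ≠ p t') →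
          (∀ t, t < k / 2 → ¬ (v (p t)).isLeft = true) → False := by
        intro p hlt hpinj hright
        have hinj : Function.Injective (fun t : Fin (k/2) =>
            (⟨(c (v (p t.val))).val - (k-1), by
              have h1 := (c (v (p t.val))).isLt
              have h2 := hvr _ (hright t.val t.isLt)
              omega⟩ : Fin (s - k + 1))) := by
          intro t t' h
          simp only [Fin.mk.injEq] at h
          by_contra hne
          have hne' : t.val ≠ t'.val := fun h' => hne (Fin.ext h')
          have h2 := hvr _ (hright t.val t.isLt)
          have h2' := hvr _ (hright t'.val t'.isLt)
          have hcc : (c (v (p t.val))).val = (c (v (p t'.val))).val := by omega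
          exact hcol (p t.val) (p t'.val) (hlt _ t.isLt) (hlt _ t'.isLt)
            (hpinj _ _ t.isLt t'.isLt hne') (Fin.ext hcc)
        have := Fintype.card_le_of_injective _ hinj
        simp at this
        omega
      by_cases hL : (v 0).isLeft = true
      · -- odd positions are on the right
        refine key (fun t => 2*t+1) ?_ ?_ ?_
        · intro t ht; show 2*t+1 < k; omega
        · intro t t' ht ht' hne; show 2*t+1 ≠ 2*t'+1; omega
        intro t ht
        have h := hside (2*t+1) (by omega)
        have : ¬ Even (2*t+1) := by simp [Nat.even_add_one, Nat.even_mul]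
        rw [h]
        simp [this, hL]
      · -- even positions are on the right
        refine key (fun t => 2*t) ?_ ?_ ?_
        · intro t ht; show 2*t < k; omega
        · intro t t' ht ht' hne; show 2*t ≠ 2*t'; omega
        intro t ht
        have h := hside (2*t) (by omega)
        have : Even (2*t) := even_two_mul t
        rw [h]
        simp [this, hL]
    · -- d = 2 : all on one side
      have hsame : ∀ i, i + 1 < k → (v (i+1)).isLeft = (v i).isLeft := by
        intro i hi
        have h := (hAP i hi).2
        rcases hvi : v i with a | b <;> rcases hvi1 : v (i+1) with a' | b' <;>
          rw [hvi, hvi1] at h <;> simp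
        · rw [dist_lr] at h; omega
        · rw [SimpleGraph.dist_comm, dist_lr] at h; omega
      have hside : ∀ i, i < k → (v i).isLeft = (v 0).isLeft := by
        intro i
        induction i with
        | zero => intro _; rfl
        | succ i ih => intro hi; rw [hsame i hi, ih (by omega)]
      by_cases hL : (v 0).isLeft = true
      · -- all left : k distinct colors among k-1 values
        have hinj : Function.Injective (fun i : Fin k =>
            (⟨(c (v i.val)).val, by
              have := hvl _ (hside i.val i.isLt ▸ hL)
              omega⟩ : Fin (k - 1))) := by
          intro i j h
          simp only [Fin.mk.injEq] at h
          by_contra hne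
          exact hcol i.val j.val i.isLt j.isLt (fun h' => hne (Fin.ext h')) (Fin.ext h)
        have := Fintype.card_le_of_injective _ hinj
        simp at this
        omega
      · -- all right : k distinct colors among s-k+1 values
        have hinj : Function.Injective (fun i : Fin k =>
            (⟨(c (v i.val)).val - (k-1), by
              have := (c (v i.val)).isLt
              omega⟩ : Fin (s - k + 1))) := by
          intro i j h
          simp only [Fin.mk.injEq] at h
          by_contra hne
          have h2 := hvr _ (fun hh => hL ((hside i.val i.isLt) ▸ hh))
          have h2' := hvr _ (fun hh => hL ((hside j.val j.isLt) ▸ hh))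
          have hcc : (c (v i.val)).val = (c (v j.val)).val := by omega
          exact hcol i.val j.val i.isLt j.isLt (fun h' => hne (Fin.ext h')) (Fin.ext hcc)
        have := Fintype.card_le_of_injective _ hinj
        simp at this
        omega

theorem stmt_19 (m n k : ℕ) (hk : 2 ≤ k) (hm : k ≤ m) (hn : k ≤ n) :
    aw (completeBipartiteGraph (Fin m) (Fin n)) k = k + k / 2 - 1 := by
  have hmem : (k + k / 2 - 1) ∈ {r : ℕ | 0 < r ∧
      ∀ c : (Fin m ⊕ Fin n) → Fin r, Function.Surjective c →
        HasRainbowAP (completeBipartiteGraph (Fin m) (Fin n)) k c} :=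
    ⟨by omega, fun c hc => upper hk hm hn c hc⟩
  refine le_antisymm (Nat.sInf_le hmem) (le_csInf ⟨_, hmem⟩ ?_)
  rintro b ⟨hb0, hall⟩
  by_contra hlt
  push_neg at hlt
  by_cases hbk : b < k
  · obtain ⟨c, hcs, hno⟩ := lower_small hk hm hb0 hbk
    exact hno (hall c hcs)
  · push_neg at hbk
    obtain ⟨c, hcs, hno⟩ := lower_mid hk hm hn hbk (by omega)
    exact hno (hall c hcs)

end AntiVDW
end
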